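/- arXiv:1506.07331 — 9 statements merged into one kernel-verified Lean document; each statement's English description precedes it below -/
import Mathlib

section
/- Let K ≥ 1, ν ≥ 0, and let A₁, A₂ be K×K complex matrices such that A₁ is invertible and banded within diagonals [−ν, ν], and such that [A₁⁻¹]_ν = [A₂]_ν. Then Tr(A₁A₂) = K (i.e. Tr(A₁A₂) = Tr(I_K)). -/
open Matrix

/-- Lemma 1 of the paper. If `A₁` is an invertible `K × K` complex matrix
banded within diagonals `[-ν, ν]`, and the band part `[A₁⁻¹]_ν` coincides with `[A₂]_ν`,
then `Tr(A₁ A₂) = K = Tr I`. -/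
theorem trace_mul_eq_card_of_banded {K : ℕ} (hK : 1 ≤ K) (ν : ℕ)
    (A₁ A₂ : Matrix (Fin K) (Fin K) ℂ)
    (hinv : IsUnit A₁)
    (hband : ∀ k ℓ : Fin K,
      (((ℓ : ℕ) : ℤ) - ((k : ℕ) : ℤ) > (ν : ℤ) ∨ ((k : ℕ) : ℤ) - ((ℓ : ℕ) : ℤ) > (ν : ℤ)) →
      A₁ k ℓ = 0)
    (htrunc : ∀ k ℓ : Fin K, |((k : ℕ) : ℤ) - ((ℓ : ℕ) : ℤ)| ≤ (ν : ℤ) →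
      A₁⁻¹ k ℓ = A₂ k ℓ) :
    Matrix.trace (A₁ * A₂) = (K : ℂ) := by
  have key : A₁ * A₂ = A₁ * A₁⁻¹ ∨ True := Or.inr trivial
  have h1 : Matrix.trace (A₁ * A₂) = Matrix.trace (A₁ * A₁⁻¹) := by
    simp only [Matrix.trace, Matrix.diag, Matrix.mul_apply]
    refine Finset.sum_congr rfl fun k _ => Finset.sum_congr rfl fun ℓ _ => ?_
    by_cases h : |((k : ℕ) : ℤ) - ((ℓ : ℕ) : ℤ)| ≤ (ν : ℤ)
    · have h' : |((ℓ : ℕ) : ℤ) - ((k : ℕ) : ℤ)| ≤ (ν : ℤ) := by rwa [abs_sub_comm]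
      rw [htrunc ℓ k h']
    · have : A₁ k ℓ = 0 := by
        apply hband
        rcases abs_cases (((k : ℕ) : ℤ) - ((ℓ : ℕ) : ℤ)) with ⟨he, _⟩ | ⟨he, _⟩ <;> omega
      rw [this, zero_mul, zero_mul]
  rw [h1, Matrix.mul_nonsing_inv _ ((Matrix.isUnit_iff_isUnit_det _).mp hinv),
    Matrix.trace_one]
  simp
end

section
/- Let H ∈ ℂ^{N×K} with HᴴH invertible, N₀ > 0, ν ≥ 0, and let G be a K×K Hermitian matrix banded within diagonals [−ν, ν] with I+G positive definite such that [(I+G)⁻¹]_ν = N₀[(HᴴH)⁻¹]_ν. Set V := (I+G)(HᴴH)⁻¹Hᴴ and R := 0. Then for any Hermitian P, I_GMI(V, R, G) = log det(I+G). -/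
open Matrix
open scoped ComplexOrder

/-- The GMI of the channel-shortening demodulator with parameters `(V, R, G)`:
`I_GMI = log det(I+G) − Tr G + 2 Re Tr(VH − RP)
  − Tr((I+G)⁻¹ (V(N₀I+HHᴴ)Vᴴ − VHPRᴴ − RPHᴴVᴴ + RPRᴴ))`. -/
noncomputable def IGMI {N K : ℕ} (H : Matrix (Fin N) (Fin K) ℂ) (N₀ : ℝ)
    (P : Matrix (Fin K) (Fin K) ℂ) (V : Matrix (Fin K) (Fin N) ℂ)
    (R G : Matrix (Fin K) (Fin K) ℂ) : ℝ :=
  (Complex.log ((1 + G).det)).re - (Matrix.trace G).re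
    + 2 * (Matrix.trace (V * H - R * P)).re
    - (Matrix.trace ((1 + G)⁻¹ * (V * ((N₀ : ℂ) • 1 + H * Hᴴ) * Vᴴ - V * H * P * Rᴴ
        - R * P * Hᴴ * Vᴴ + R * P * Rᴴ))).re

/-- `[A]_ν`: the matrix agreeing with `A` on the diagonals `|k − ℓ| ≤ ν` and zero elsewhere. -/
def bandPart {K : ℕ} (ν : ℕ) (A : Matrix (Fin K) (Fin K) ℂ) : Matrix (Fin K) (Fin K) ℂ :=
  Matrix.of fun k ℓ => if |((k : ℕ) : ℤ) - ((ℓ : ℕ) : ℤ)| ≤ (ν : ℤ) then A k ℓ else 0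

/-- Trace of `bandPart ν A * B` equals trace of `A * B` when `B` is banded within `ν`. -/
lemma trace_bandPart_mul {K : ℕ} (ν : ℕ) (A B : Matrix (Fin K) (Fin K) ℂ)
    (hB : ∀ k ℓ : Fin K, |((k : ℕ) : ℤ) - ((ℓ : ℕ) : ℤ)| > (ν : ℤ) → B k ℓ = 0) :
    (bandPart ν A * B).trace = (A * B).trace := by
  simp only [Matrix.trace, Matrix.diag, Matrix.mul_apply, bandPart, Matrix.of_apply]
  refine Finset.sum_congr rfl fun k _ => Finset.sum_congr rfl fun ℓ _ => ?_
  by_cases h : |((k : ℕ) : ℤ) - ((ℓ : ℕ) : ℤ)| ≤ (ν : ℤ)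
  · simp [h]
  · have hz : B ℓ k = 0 := by
      apply hB
      rw [abs_sub_comm]
      exact lt_of_not_ge h
    simp [h, hz]

/-- Example 1, extended zero-forcing. If `G` is Hermitian, banded within
`[-ν, ν]`, with `I+G` positive definite and `[(I+G)⁻¹]_ν = N₀ [(HᴴH)⁻¹]_ν`, then with
`V = (I+G)(HᴴH)⁻¹Hᴴ` and `R = 0` the GMI equals `log det(I+G)`. -/
theorem gmi_ezf {N K : ℕ} (hK : 1 ≤ K) (H : Matrix (Fin N) (Fin K) ℂ)
    (hinv : IsUnit (Hᴴ * H)) (N₀ : ℝ) (hN₀ : 0 < N₀) (ν : ℕ)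
    (G : Matrix (Fin K) (Fin K) ℂ) (hG : G.IsHermitian)
    (hband : ∀ k ℓ : Fin K, |((k : ℕ) : ℤ) - ((ℓ : ℕ) : ℤ)| > (ν : ℤ) → G k ℓ = 0)
    (hpd : (1 + G).PosDef)
    (hcond : bandPart ν (1 + G)⁻¹ = (N₀ : ℂ) • bandPart ν (Hᴴ * H)⁻¹)
    (P : Matrix (Fin K) (Fin K) ℂ) (hP : P.IsHermitian) :
    IGMI H N₀ P ((1 + G) * (Hᴴ * H)⁻¹ * Hᴴ) 0 G = (Complex.log ((1 + G).det)).re := by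
  set A : Matrix (Fin K) (Fin K) ℂ := Hᴴ * H with hA
  set S : Matrix (Fin K) (Fin K) ℂ := 1 + G with hSdef
  have hAdet : IsUnit A.det := (Matrix.isUnit_iff_isUnit_det A).mp hinv
  have hAinv : A⁻¹ * A = 1 := Matrix.nonsing_inv_mul A hAdet
  have hAinv' : A * A⁻¹ = 1 := Matrix.mul_nonsing_inv A hAdet
  have hAH : Aᴴ = A := by simp [hA, Matrix.conjTranspose_mul, Matrix.mul_assoc]
  have hAinvH : (A⁻¹)ᴴ = A⁻¹ := by rw [Matrix.conjTranspose_nonsing_inv, hAH]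
  have hSH : Sᴴ = S := by simp [hSdef, hG.eq]
  have hSdet : IsUnit S.det := (Matrix.isUnit_iff_isUnit_det S).mp hpd.isUnit
  have hSinv : S⁻¹ * S = 1 := Matrix.nonsing_inv_mul S hSdet
  -- S is banded
  have hSband : ∀ k ℓ : Fin K, |((k : ℕ) : ℤ) - ((ℓ : ℕ) : ℤ)| > (ν : ℤ) → S k ℓ = 0 := by
    intro k ℓ h
    have hne : k ≠ ℓ := by
      intro he; subst he; simp at h; omega
    simp [hSdef, Matrix.add_apply, Matrix.one_apply_ne hne, hband k ℓ h]
  -- key trace identity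
  have key : (N₀ : ℂ) * (A⁻¹ * S).trace = (K : ℂ) := by
    have h2 := trace_bandPart_mul ν A⁻¹ S hSband
    have h1 := trace_bandPart_mul ν S⁻¹ S hSband
    calc (N₀ : ℂ) * (A⁻¹ * S).trace
        = ((N₀ : ℂ) • bandPart ν A⁻¹ * S).trace := by
          rw [Matrix.smul_mul, Matrix.trace_smul, smul_eq_mul, h2]
      _ = (bandPart ν S⁻¹ * S).trace := by rw [hcond]
      _ = (S⁻¹ * S).trace := h1
      _ = (K : ℂ) := by rw [hSinv]; simp [Matrix.trace_one]
  -- V * H = S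
  have hVH : S * A⁻¹ * Hᴴ * H = S := by
    rw [Matrix.mul_assoc (S * A⁻¹), ← hA, Matrix.mul_assoc, hAinv, mul_one]
  -- Vᴴ
  have hVconj : (S * A⁻¹ * Hᴴ)ᴴ = H * (A⁻¹ * S) := by
    simp [Matrix.conjTranspose_mul, hAinvH, hSH, Matrix.mul_assoc]
  -- the quadratic term
  have hquad : S * A⁻¹ * Hᴴ * ((N₀ : ℂ) • 1 + H * Hᴴ) * (S * A⁻¹ * Hᴴ)ᴴ
      = (N₀ : ℂ) • (S * (A⁻¹ * S)) + S * S := by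
    rw [hVconj]
    have e1 : Hᴴ * ((N₀ : ℂ) • 1 + H * Hᴴ) * H = (N₀ : ℂ) • A + A * A := by
      simp [Matrix.mul_add, Matrix.add_mul, Matrix.mul_smul, Matrix.smul_mul, hA,
        Matrix.mul_assoc]
    calc S * A⁻¹ * Hᴴ * ((N₀ : ℂ) • 1 + H * Hᴴ) * (H * (A⁻¹ * S))
        = S * A⁻¹ * (Hᴴ * ((N₀ : ℂ) • 1 + H * Hᴴ) * H) * (A⁻¹ * S) := by
          simp only [Matrix.mul_assoc]
      _ = S * A⁻¹ * ((N₀ : ℂ) • A + A * A) * (A⁻¹ * S) := by rw [e1]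
      _ = (N₀ : ℂ) • (S * ((A⁻¹ * A) * (A⁻¹ * S))) + S * ((A⁻¹ * A) * (A * A⁻¹) * S) := by
          rw [Matrix.mul_add, Matrix.mul_smul, Matrix.add_mul, Matrix.smul_mul]
          noncomm_ring
      _ = (N₀ : ℂ) • (S * (A⁻¹ * S)) + S * S := by rw [hAinv, hAinv', one_mul, one_mul, one_mul]
  -- now unfold and compute
  unfold IGMI
  rw [show (0 : Matrix (Fin K) (Fin K) ℂ) * P = 0 by simp, sub_zero,
    show (0 : Matrix (Fin K) (Fin K) ℂ)ᴴ = 0 from Matrix.conjTranspose_zero]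
  simp only [Matrix.mul_zero, Matrix.zero_mul, sub_zero, add_zero]
  rw [← hSdef, hVH, hquad]
  have hfin : S⁻¹ * ((N₀ : ℂ) • (S * (A⁻¹ * S)) + S * S) = (N₀ : ℂ) • (A⁻¹ * S) + S := by
    rw [Matrix.mul_add, Matrix.mul_smul, ← Matrix.mul_assoc S⁻¹ S, ← Matrix.mul_assoc S⁻¹ S,
      hSinv, one_mul, one_mul]
  rw [hfin]
  simp only [Matrix.trace_add, Matrix.trace_smul, smul_eq_mul]
  rw [key]
  have hTrS : S.trace = (K : ℂ) + G.trace := by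
    rw [hSdef, Matrix.trace_add, Matrix.trace_one]; simp
  rw [hTrS]
  simp [Complex.add_re]
  ring
end

section
/- Let H ∈ ℂ^{N×K}, N₀ > 0, ν ≥ 0, and set G := [HᴴH/N₀]_ν (which is Hermitian); assume I+G is positive definite. With V := Hᴴ/N₀ and R := 0, for any Hermitian P, I_GMI(V, R, G) = log det(I + [HᴴH/N₀]_ν) − Tr((HᴴH/N₀)(I + [HᴴH/N₀]_ν)⁻¹[HᴴH/N₀]_{∖ν}). -/
open Matrix
open scoped ComplexOrder

/-- Example 2, truncated matched filter. With `G = [HᴴH/N₀]_ν`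
(which is Hermitian), `V = Hᴴ/N₀` and `R = 0`, assuming `I+G` positive definite,
`I_GMI = log det(I + [HᴴH/N₀]_ν) − Tr((HᴴH/N₀)(I + [HᴴH/N₀]_ν)⁻¹ [HᴴH/N₀]_{∖ν})`. -/
theorem gmi_tmf {N K : ℕ} (hK : 1 ≤ K) (H : Matrix (Fin N) (Fin K) ℂ)
    (N₀ : ℝ) (hN₀ : 0 < N₀) (ν : ℕ)
    (A : Matrix (Fin K) (Fin K) ℂ) (hA : A = (N₀ : ℂ)⁻¹ • (Hᴴ * H))
    (hpd : (1 + bandPart ν A).PosDef)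
    (P : Matrix (Fin K) (Fin K) ℂ) (hP : P.IsHermitian) :
    (bandPart ν A).IsHermitian ∧
      IGMI H N₀ P ((N₀ : ℂ)⁻¹ • Hᴴ) 0 (bandPart ν A)
        = (Complex.log ((1 + bandPart ν A).det)).re
          - (Matrix.trace (A * (1 + bandPart ν A)⁻¹ * (A - bandPart ν A))).re := by
  have hne : (N₀ : ℂ) ≠ 0 := by exact_mod_cast hN₀.ne'
  have hstar : star ((N₀ : ℂ)⁻¹) = (N₀ : ℂ)⁻¹ := by
    simp [Complex.star_def, ← Complex.ofReal_inv]
  have hAh : A.IsHermitian := by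
    rw [hA]
    unfold Matrix.IsHermitian
    rw [Matrix.conjTranspose_smul, Matrix.conjTranspose_mul, Matrix.conjTranspose_conjTranspose,
      hstar]
  have hG : (bandPart ν A).IsHermitian := by
    ext k ℓ
    simp only [bandPart, Matrix.conjTranspose_apply, Matrix.of_apply, apply_ite star, star_zero]
    rw [abs_sub_comm]
    split
    · exact congrFun (congrFun hAh k) ℓ
    · rfl
  refine ⟨hG, ?_⟩
  set G := bandPart ν A with hGdef
  have htr : Matrix.trace G = Matrix.trace A := by
    unfold Matrix.trace
    congr 1
    ext k
    simp [hGdef, bandPart, Matrix.diag]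
  have hdet : IsUnit (1 + G).det := hpd.det_pos.ne'.isUnit
  have hBinv : A * ((1 + G)⁻¹ * (1 + G)) = A := by
    rw [Matrix.nonsing_inv_mul _ hdet, Matrix.mul_one]
  have hV : ((N₀:ℂ)⁻¹ • Hᴴ) * H = A := by rw [hA, Matrix.smul_mul]
  have hprod : ((N₀:ℂ)⁻¹ • Hᴴ) * ((N₀:ℂ) • 1 + H * Hᴴ) * ((N₀:ℂ)⁻¹ • Hᴴ)ᴴ = A + A * A := by
    rw [Matrix.conjTranspose_smul, Matrix.conjTranspose_conjTranspose, hstar, hA]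
    rw [Matrix.smul_mul, Matrix.mul_smul, Matrix.smul_mul, Matrix.mul_smul, smul_smul]
    have e1 : Hᴴ * ((N₀:ℂ) • 1 + H * Hᴴ) * H
        = (N₀:ℂ) • (Hᴴ * H) + (Hᴴ * H) * (Hᴴ * H) := by
      rw [Matrix.mul_add, Matrix.add_mul, Matrix.mul_smul, Matrix.mul_one, Matrix.smul_mul,
        Matrix.mul_assoc Hᴴ (H * Hᴴ) H, Matrix.mul_assoc H Hᴴ H, ← Matrix.mul_assoc Hᴴ H (Hᴴ * H)]
    rw [e1, Matrix.smul_mul, smul_add, smul_smul, smul_smul]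
    congr 2 <;> field_simp
  have hABG : A * (1 + G)⁻¹ * (A - G) = A * (1 + G)⁻¹ * A + A * (1 + G)⁻¹ - A := by
    have h1 : A - G = A + (1 : Matrix (Fin K) (Fin K) ℂ) - (1 + G) := by abel
    rw [h1, Matrix.mul_sub, Matrix.mul_add, Matrix.mul_one,
      Matrix.mul_assoc A (1 + G)⁻¹ (1 + G), hBinv]
  have key : Matrix.trace (A * (1 + G)⁻¹ * (A - G))
      = Matrix.trace G - Matrix.trace A - Matrix.trace A
        + Matrix.trace ((1 + G)⁻¹ * (A + A * A)) := by
    rw [hABG, Matrix.mul_add, Matrix.trace_add, Matrix.trace_sub, Matrix.trace_add, htr,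
      Matrix.trace_mul_cycle A ((1 + G)⁻¹) A, Matrix.trace_mul_comm ((1 + G)⁻¹) A,
      Matrix.trace_mul_comm ((1 + G)⁻¹) (A * A)]
    ring
  simp only [IGMI, Matrix.zero_mul, Matrix.mul_zero, Matrix.conjTranspose_zero,
    sub_zero, add_zero, hV, hprod]
  have := congrArg Complex.re key
  simp only [Complex.sub_re, Complex.add_re] at this
  have htrre := congrArg Complex.re htr
  linarith
end

section
/- Let K ≥ 1, let B ∈ ℂ^{K×K} be Hermitian positive semidefinite, M̃ ∈ ℂ^{K×K} Hermitian negative definite, and A ∈ ℂ^{K×K} arbitrary. Let 𝒮 ⊆ {0,…,K−1}² and define, for T ∈ ℂ^{K×K}, f(T) := Tr(Tᴴ B T M̃) + 2 Re Tr(Aᴴ T). Suppose T* vanishes at every position outside 𝒮 and the matrix B T* M̃ + A vanishes at every position inside 𝒮. Then for every T ∈ ℂ^{K×K} vanishing at every position outside 𝒮, f(T) ≤ f(T*). -/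
open Matrix
open scoped ComplexOrder

/-!
Write `T = T* + D`. Expanding the objective, the part linear in `D` is
`2 Re Tr((B T* M̃ + A)ᴴ D)`, which vanishes because `B T* M̃ + A` is zero on `𝒮` while `D` is
supported on `𝒮`. The remaining quadratic part is `Tr(Dᴴ B D M̃) = -Tr(Dᴴ B D (-M̃)) ≤ 0`, since the
trace of a product of two positive semidefinite matrices is nonnegative.
-/

namespace Matrix

variable {𝕜 m n : Type*} [RCLike 𝕜] [Fintype m] [Fintype n]

theorem trace_conjTranspose_mul_eq_zero_of_support {R : Type*} [Semiring R] [StarRing R]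
    {S : Set (m × n)} {X Y : Matrix m n R} (hX : ∀ i j, (i, j) ∈ S → X i j = 0)
    (hY : ∀ i j, (i, j) ∉ S → Y i j = 0) : (Xᴴ * Y).trace = 0 := by
  refine Finset.sum_eq_zero fun j _ => Finset.sum_eq_zero fun i _ => ?_
  by_cases h : (i, j) ∈ S
  · simp [hX i j h]
  · simp [hY i j h]

open scoped MatrixOrder in
theorem PosSemidef.trace_mul_nonneg {P Q : Matrix n n 𝕜} (hP : P.PosSemidef)
    (hQ : Q.PosSemidef) : 0 ≤ (P * Q).trace := by
  classical
  obtain ⟨C, rfl⟩ := CStarAlgebra.nonneg_iff_eq_star_mul_self.mp hQ.nonneg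
  rw [star_eq_conjTranspose, ← mul_assoc, trace_mul_comm]
  simpa only [mul_assoc] using (hP.mul_mul_conjTranspose_same C).trace_nonneg

/-- The function `f` of the paper: the `T`-dependent part of the GMI. -/
noncomputable def icObjective (B M A T : Matrix n n 𝕜) : ℝ :=
  RCLike.re (Tᴴ * B * T * M).trace + 2 * RCLike.re (Aᴴ * T).trace

theorem icObjective_add {B M : Matrix n n 𝕜} (hB : B.IsHermitian) (hM : M.IsHermitian)
    (A X D : Matrix n n 𝕜) :
    icObjective B M A (X + D) = icObjective B M A X
      + 2 * RCLike.re ((B * X * M + A)ᴴ * D).trace + RCLike.re (Dᴴ * B * D * M).trace := by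
  have hconj : (Dᴴ * B * X * M).trace = star ((B * X * M)ᴴ * D).trace := by
    rw [← trace_conjTranspose]
    simp only [conjTranspose_mul, conjTranspose_conjTranspose, mul_assoc]
  have hcycle : ((B * X * M)ᴴ * D).trace = (Xᴴ * B * D * M).trace := by
    simp only [conjTranspose_mul, hB.eq, hM.eq, mul_assoc]
    rw [trace_mul_comm, mul_assoc, mul_assoc]
  simp only [icObjective, conjTranspose_add, add_mul, mul_add, trace_add, map_add, hconj,
    RCLike.star_def, RCLike.conj_re, hcycle]
  ring

end Matrix

theorem method1_ic_max_general {K : ℕ}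
    (B Mt A : Matrix (Fin K) (Fin K) ℂ)
    (hB : B.PosSemidef) (hMt : (-Mt).PosDef)
    (S : Set (Fin K × Fin K))
    (Tstar : Matrix (Fin K) (Fin K) ℂ)
    (hsupp : ∀ k ℓ : Fin K, (k, ℓ) ∉ S → Tstar k ℓ = 0)
    (hstat : ∀ k ℓ : Fin K, (k, ℓ) ∈ S → (B * Tstar * Mt + A) k ℓ = 0) :
    ∀ T : Matrix (Fin K) (Fin K) ℂ, (∀ k ℓ : Fin K, (k, ℓ) ∉ S → T k ℓ = 0) →
      (Matrix.trace (Tᴴ * B * T * Mt)).re + 2 * (Matrix.trace (Aᴴ * T)).re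
        ≤ (Matrix.trace (Tstarᴴ * B * Tstar * Mt)).re
          + 2 * (Matrix.trace (Aᴴ * Tstar)).re := by
  intro T hT
  set D := T - Tstar
  have hD : ∀ k ℓ, (k, ℓ) ∉ S → D k ℓ = 0 := fun k ℓ h => by
    simp [D, hT k ℓ h, hsupp k ℓ h]
  have hMt_herm : Mt.IsHermitian := by simpa using hMt.isHermitian.neg
  have hlin : ((B * Tstar * Mt + A)ᴴ * D).trace = 0 :=
    trace_conjTranspose_mul_eq_zero_of_support hstat hD
  have hquad : (Dᴴ * B * D * Mt).trace.re ≤ 0 := by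
    have h := (hB.conjTranspose_mul_mul_same D).trace_mul_nonneg hMt.posSemidef
    rw [mul_neg, trace_neg, neg_nonneg] at h
    exact (Complex.le_def.mp h).1
  have hexpand := icObjective_add hB.isHermitian hMt_herm A Tstar D
  rw [add_sub_cancel, hlin] at hexpand
  simp only [icObjective, RCLike.re_to_complex, Complex.zero_re] at hexpand
  linarith

/-- interference-cancelation part of Proposition 1, Method I. Let `B` be
Hermitian positive semidefinite, `M̃` Hermitian negative definite, `A` arbitrary, and
`f(T) = Tr(Tᴴ B T M̃) + 2 Re Tr(Aᴴ T)`. If `T*` is supported on `𝒮` and `B T* M̃ + A`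
vanishes on `𝒮`, then `T*` maximizes `f` over matrices supported on `𝒮`. -/
theorem method1_ic_max {K : ℕ} (hK : 1 ≤ K)
    (B Mt A : Matrix (Fin K) (Fin K) ℂ)
    (hB : B.PosSemidef) (hMt : (-Mt).PosDef)
    (S : Set (Fin K × Fin K))
    (Tstar : Matrix (Fin K) (Fin K) ℂ)
    (hsupp : ∀ k ℓ : Fin K, (k, ℓ) ∉ S → Tstar k ℓ = 0)
    (hstat : ∀ k ℓ : Fin K, (k, ℓ) ∈ S → (B * Tstar * Mt + A) k ℓ = 0) :
    ∀ T : Matrix (Fin K) (Fin K) ℂ, (∀ k ℓ : Fin K, (k, ℓ) ∉ S → T k ℓ = 0) →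
      (Matrix.trace (Tᴴ * B * T * Mt)).re + 2 * (Matrix.trace (Aᴴ * T)).re
        ≤ (Matrix.trace (Tstarᴴ * B * Tstar * Mt)).re
          + 2 * (Matrix.trace (Aᴴ * Tstar)).re :=
  method1_ic_max_general B Mt A hB hMt S Tstar hsupp hstat
end

section
/- Let K ≥ 1, ν ≥ 0, and let M be a K×K Hermitian negative definite matrix. For Hermitian G banded within diagonals [−ν, ν] with I+G positive definite, define I(G) := K + log det(I+G) + Tr(M(I+G)). Suppose G* is Hermitian, banded within diagonals [−ν, ν], with I+G* positive definite, and satisfies [(I+G*)⁻¹]_ν = −[M]_ν. Then (i) for every Hermitian G banded within [−ν, ν] with I+G positive definite, I(G) ≤ I(G*); and (ii) I(G*) = log det(I+G*). -/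
open Matrix
open scoped ComplexOrder

/-- The objective `I(G) = K + log det(I+G) + Tr(M(I+G))` of Theorem 2. -/
noncomputable def Ifun {K : ℕ} (M G : Matrix (Fin K) (Fin K) ℂ) : ℝ :=
  K + (Complex.log ((1 + G).det)).re + (Matrix.trace (M * (1 + G))).re

/-!
Writing `P = I + G*` and `Q = I + G`, the stationarity condition `[P⁻¹]_ν = −[M]_ν` and the
bandedness of `Q` give `Tr(M Q) = −Tr(P⁻¹ Q)`, because a trace `Tr(X Q)` with `Q` banded only
sees `[X]_ν`. Hence `I(G) − I(G*) = log det(P⁻¹ Q) − Tr(P⁻¹ Q) + K`, which is `≤ 0` by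
`log λ ≤ λ − 1` applied to the (positive) eigenvalues of `Q^{1/2} P⁻¹ Q^{1/2}`.
For `G = G*` the trace term is `−K`, which gives `I(G*) = log det P`.
-/

namespace Matrix

variable {n 𝕜 : Type*} [Fintype n] [DecidableEq n] [RCLike 𝕜]

theorem PosDef.log_norm_det_le_trace_sub_card {B : Matrix n n 𝕜} (hB : B.PosDef) :
    Real.log ‖B.det‖ ≤ RCLike.re B.trace - Fintype.card n := by
  have hH := hB.isHermitian
  have hpos : ∀ i, 0 < hH.eigenvalues i := hB.eigenvalues_pos
  have hnorm_det : ‖B.det‖ = ∏ i, hH.eigenvalues i := by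
    rw [hH.det_eq_prod_eigenvalues, norm_prod]
    exact Finset.prod_congr rfl fun i _ => by rw [RCLike.norm_ofReal, abs_of_pos (hpos i)]
  have hre_trace : RCLike.re B.trace = ∑ i, hH.eigenvalues i := by
    rw [hH.trace_eq_sum_eigenvalues, ← RCLike.ofReal_sum, RCLike.ofReal_re]
  rw [hnorm_det, hre_trace, Real.log_prod fun i _ => (hpos i).ne']
  calc ∑ i, Real.log (hH.eigenvalues i) ≤ ∑ i, (hH.eigenvalues i - 1) :=
        Finset.sum_le_sum fun i _ => Real.log_le_sub_one_of_pos (hpos i)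
    _ = ∑ i, hH.eigenvalues i - Fintype.card n := by simp [Finset.sum_sub_distrib]

open scoped MatrixOrder in
theorem PosDef.log_norm_det_le_add_trace_inv_mul_sub_card {P Q : Matrix n n 𝕜}
    (hP : P.PosDef) (hQ : Q.PosDef) :
    Real.log ‖Q.det‖ ≤ Real.log ‖P.det‖ + RCLike.re (P⁻¹ * Q).trace - Fintype.card n := by
  set S := CFC.sqrt Q
  have hS : S.IsHermitian := (CFC.sqrt_nonneg Q).posSemidef.isHermitian
  have hSS : S * S = Q := CFC.sqrt_mul_sqrt_self Q hQ.posSemidef.nonneg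
  have hdetP : P.det ≠ 0 := hP.det_pos.ne'
  have hdetQ : Q.det ≠ 0 := hQ.det_pos.ne'
  have hdetS : S.det ≠ 0 := fun h => hdetQ (by rw [← hSS, det_mul, h, zero_mul])
  have hB : (S * P⁻¹ * S).PosDef := by
    simpa only [hS.eq] using hP.inv.conjTranspose_mul_mul_same
      (mulVec_injective_iff_isUnit.2 ((isUnit_iff_isUnit_det S).2 hdetS.isUnit))
  have htrace : (S * P⁻¹ * S).trace = (P⁻¹ * Q).trace := by
    rw [trace_mul_comm, ← mul_assoc, hSS, trace_mul_comm]
  have hdet : (S * P⁻¹ * S).det = Q.det * P.det⁻¹ := by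
    rw [det_mul, det_mul, det_nonsing_inv, Ring.inverse_eq_inv', ← hSS, det_mul]
    ring
  have := hB.log_norm_det_le_trace_sub_card
  rw [hdet, htrace, norm_mul, norm_inv, Real.log_mul (norm_ne_zero_iff.2 hdetQ)
    (inv_ne_zero (norm_ne_zero_iff.2 hdetP)), Real.log_inv] at this
  linarith

end Matrix

def IsBanded {K : ℕ} (ν : ℕ) (A : Matrix (Fin K) (Fin K) ℂ) : Prop :=
  ∀ k ℓ : Fin K, |((k : ℕ) : ℤ) - ((ℓ : ℕ) : ℤ)| > (ν : ℤ) → A k ℓ = 0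

theorem IsBanded.one_add {K ν : ℕ} {G : Matrix (Fin K) (Fin K) ℂ} (hG : IsBanded ν G) :
    IsBanded ν (1 + G) := by
  intro k ℓ h
  have hkℓ : k ≠ ℓ := by rintro rfl; simp at h; omega
  rw [Matrix.add_apply, one_apply_ne hkℓ, hG k ℓ h, add_zero]

theorem trace_bandPart_mul_of_isBanded {K ν : ℕ} (X : Matrix (Fin K) (Fin K) ℂ)
    {A : Matrix (Fin K) (Fin K) ℂ} (hA : IsBanded ν A) :
    (bandPart ν X * A).trace = (X * A).trace := by
  simp only [trace, diag, mul_apply]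
  refine Finset.sum_congr rfl fun k _ => Finset.sum_congr rfl fun ℓ _ => ?_
  by_cases h : |((k : ℕ) : ℤ) - ((ℓ : ℕ) : ℤ)| ≤ (ν : ℤ)
  · simp [bandPart, h]
  · simp [bandPart, h, hA ℓ k (by rw [abs_sub_comm]; omega)]

theorem trace_mul_eq_neg_trace_inv_mul_of_bandPart_inv {K ν : ℕ}
    {M P A : Matrix (Fin K) (Fin K) ℂ} (hstat : bandPart ν P⁻¹ = -bandPart ν M)
    (hA : IsBanded ν A) : (M * A).trace = -(P⁻¹ * A).trace := by
  rw [← trace_bandPart_mul_of_isBanded M hA, ← neg_neg (bandPart ν M), ← hstat, neg_mul,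
    trace_neg, trace_bandPart_mul_of_isBanded _ hA]

theorem gmi_banded_max_general {K : ℕ} (ν : ℕ)
    (M : Matrix (Fin K) (Fin K) ℂ)
    (Gstar : Matrix (Fin K) (Fin K) ℂ)
    (hGband : ∀ k ℓ : Fin K, |((k : ℕ) : ℤ) - ((ℓ : ℕ) : ℤ)| > (ν : ℤ) → Gstar k ℓ = 0)
    (hGpd : (1 + Gstar).PosDef)
    (hstat : bandPart ν (1 + Gstar)⁻¹ = -(bandPart ν M)) :
    (∀ G : Matrix (Fin K) (Fin K) ℂ, G.IsHermitian →
        (∀ k ℓ : Fin K, |((k : ℕ) : ℤ) - ((ℓ : ℕ) : ℤ)| > (ν : ℤ) → G k ℓ = 0) →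
        (1 + G).PosDef → Ifun M G ≤ Ifun M Gstar) ∧
      Ifun M Gstar = (Complex.log ((1 + Gstar).det)).re := by
  have htrace_star : (M * (1 + Gstar)).trace = -K := by
    rw [trace_mul_eq_neg_trace_inv_mul_of_bandPart_inv hstat (IsBanded.one_add hGband),
      nonsing_inv_mul _ hGpd.det_pos.ne'.isUnit, trace_one, Fintype.card_fin]
  have hIfun_star : Ifun M Gstar = (Complex.log ((1 + Gstar).det)).re := by
    simp [Ifun, htrace_star]
  refine ⟨fun G _ hGband' hGpd' => ?_, hIfun_star⟩
  have hkey := hGpd.log_norm_det_le_add_trace_inv_mul_sub_card hGpd'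
  rw [Fintype.card_fin, RCLike.re_to_complex] at hkey
  rw [hIfun_star, Ifun, trace_mul_eq_neg_trace_inv_mul_of_bandPart_inv hstat
    (IsBanded.one_add hGband'), Complex.neg_re, Complex.log_re, Complex.log_re]
  linarith

/-- Theorem 2 of the paper. For `M` Hermitian negative definite, the unique
banded Hermitian `G*` with `I+G*` positive definite satisfying `[(I+G*)⁻¹]_ν = −[M]_ν`
maximizes `I(G) = K + log det(I+G) + Tr(M(I+G))` over all banded Hermitian `G` with `I+G`
positive definite, and `I(G*) = log det(I+G*)`. -/
theorem gmi_banded_max {K : ℕ} (hK : 1 ≤ K) (ν : ℕ)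
    (M : Matrix (Fin K) (Fin K) ℂ) (hM : (-M).PosDef)
    (Gstar : Matrix (Fin K) (Fin K) ℂ) (hGh : Gstar.IsHermitian)
    (hGband : ∀ k ℓ : Fin K, |((k : ℕ) : ℤ) - ((ℓ : ℕ) : ℤ)| > (ν : ℤ) → Gstar k ℓ = 0)
    (hGpd : (1 + Gstar).PosDef)
    (hstat : bandPart ν (1 + Gstar)⁻¹ = -(bandPart ν M)) :
    (∀ G : Matrix (Fin K) (Fin K) ℂ, G.IsHermitian →
        (∀ k ℓ : Fin K, |((k : ℕ) : ℤ) - ((ℓ : ℕ) : ℤ)| > (ν : ℤ) → G k ℓ = 0) →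
        (1 + G).PosDef → Ifun M G ≤ Ifun M Gstar) ∧
      Ifun M Gstar = (Complex.log ((1 + Gstar).det)).re :=
  gmi_banded_max_general ν M Gstar hGband hGpd hstat
end

section
/- Let H ∈ ℂ^{N×K}, N₀ > 0, let P ∈ ℂ^{K×K} be Hermitian, diagonal and invertible, and set M := Hᴴ(N₀I + HHᴴ)⁻¹H − I and M̃ := P(I+M)P − P. Let F ∈ ℂ^{K×K} be invertible and banded within diagonals [0, ν] (ν ≥ 0), let T ∈ ℂ^{K×K}, and set W := F^{−H}(I + FᴴF + FᴴTP)Hᴴ(N₀I + HHᴴ)⁻¹. If Δ := F(I+FᴴF)⁻¹FᴴT M̃ + FMP is banded within diagonals [0, ν], then Fᴴ(WH − T) is banded within diagonals [−ν, K−1]; that is, (Fᴴ(WH − T))(k,ℓ) = 0 whenever ℓ − k > ν. -/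
open Matrix
open scoped ComplexOrder

/-- Proposition 2 of the paper. For the optimal front-end filter
`W = F⁻ᴴ(I + FᴴF + FᴴTP)Hᴴ(N₀I+HHᴴ)⁻¹` and an interference cancelation matrix `T` whose
stationarity residual `Δ = F(I+FᴴF)⁻¹FᴴT M̃ + FMP` is banded within `[0, ν]`, the effective
channel `Fᴴ(WH − T)` is banded within `[-ν, K−1]`, i.e. vanishes whenever `ℓ − k > ν`. -/
theorem method1_effective_channel_banded {N K : ℕ}
    (H : Matrix (Fin N) (Fin K) ℂ) (N₀ : ℝ) (hN₀ : 0 < N₀)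
    (P : Matrix (Fin K) (Fin K) ℂ) (hPh : P.IsHermitian) (hPd : P.IsDiag) (hPu : IsUnit P)
    (M : Matrix (Fin K) (Fin K) ℂ)
    (hM : M = Hᴴ * ((N₀ : ℂ) • 1 + H * Hᴴ)⁻¹ * H - 1)
    (Mt : Matrix (Fin K) (Fin K) ℂ) (hMt : Mt = P * (1 + M) * P - P)
    (ν : ℕ) (F : Matrix (Fin K) (Fin K) ℂ) (hF : IsUnit F)
    (hFband : ∀ k ℓ : Fin K,
      (((ℓ : ℕ) : ℤ) - ((k : ℕ) : ℤ) > 0 ∨ ((k : ℕ) : ℤ) - ((ℓ : ℕ) : ℤ) > (ν : ℤ)) →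
      F k ℓ = 0)
    (T : Matrix (Fin K) (Fin K) ℂ)
    (W : Matrix (Fin K) (Fin N) ℂ)
    (hW : W = (Fᴴ)⁻¹ * (1 + Fᴴ * F + Fᴴ * T * P) * Hᴴ * ((N₀ : ℂ) • 1 + H * Hᴴ)⁻¹)
    (hΔ : ∀ k ℓ : Fin K,
      (((ℓ : ℕ) : ℤ) - ((k : ℕ) : ℤ) > 0 ∨ ((k : ℕ) : ℤ) - ((ℓ : ℕ) : ℤ) > (ν : ℤ)) →
      (F * (1 + Fᴴ * F)⁻¹ * Fᴴ * T * Mt + F * M * P) k ℓ = 0) :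
    ∀ k ℓ : Fin K, ((ℓ : ℕ) : ℤ) - ((k : ℕ) : ℤ) > (ν : ℤ) → (Fᴴ * (W * H - T)) k ℓ = 0 := by
  -- invertibility facts
  have hFdet : IsUnit F.det := (Matrix.isUnit_iff_isUnit_det F).mp hF
  have hFHdet : IsUnit (Fᴴ).det :=
    (Matrix.isUnit_iff_isUnit_det _).mp ((Matrix.isUnit_conjTranspose F).mpr hF)
  have hPdet : IsUnit P.det := (Matrix.isUnit_iff_isUnit_det P).mp hPu
  have hSpd : ((1 : Matrix (Fin K) (Fin K) ℂ) + Fᴴ * F).PosDef :=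
    Matrix.PosDef.add_posSemidef Matrix.PosDef.one (Matrix.posSemidef_conjTranspose_mul_self F)
  have hSdet : IsUnit ((1 : Matrix (Fin K) (Fin K) ℂ) + Fᴴ * F).det :=
    (Matrix.isUnit_iff_isUnit_det _).mp hSpd.isUnit
  set S : Matrix (Fin K) (Fin K) ℂ := 1 + Fᴴ * F with hSdef
  set Δ : Matrix (Fin K) (Fin K) ℂ := F * S⁻¹ * Fᴴ * T * Mt + F * M * P with hΔdef
  -- basic cancellations
  have hPP : P * P⁻¹ = 1 := Matrix.mul_nonsing_inv _ hPdet
  have hFF : F * F⁻¹ = 1 := Matrix.mul_nonsing_inv _ hFdet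
  have hFiF : F⁻¹ * F = 1 := Matrix.nonsing_inv_mul _ hFdet
  have hSS : S * S⁻¹ = 1 := Matrix.mul_nonsing_inv _ hSdet
  have hFHi : Fᴴ * (Fᴴ)⁻¹ = 1 := Matrix.mul_nonsing_inv _ hFHdet
  have hG : Hᴴ * (((N₀ : ℂ) • 1 + H * Hᴴ)⁻¹ * H) = 1 + M := by
    rw [hM, ← Matrix.mul_assoc]; abel
  -- key algebraic identity
  have lhs : Fᴴ * (W * H - T) = (1 + Fᴴ * F + Fᴴ * T * P) * (1 + M) - Fᴴ * T := by
    rw [hW, Matrix.mul_sub]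
    congr 1
    calc Fᴴ * ((Fᴴ)⁻¹ * (1 + Fᴴ * F + Fᴴ * T * P) * Hᴴ * ((N₀ : ℂ) • 1 + H * Hᴴ)⁻¹ * H)
        = Fᴴ * (Fᴴ)⁻¹ * ((1 + Fᴴ * F + Fᴴ * T * P) *
            (Hᴴ * (((N₀ : ℂ) • 1 + H * Hᴴ)⁻¹ * H))) := by
          simp only [Matrix.mul_assoc]
      _ = (1 + Fᴴ * F + Fᴴ * T * P) * (1 + M) := by rw [hFHi, hG, Matrix.one_mul]
  have hMtP : Mt * P⁻¹ = P * (1 + M) - 1 := by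
    rw [hMt, Matrix.sub_mul, Matrix.mul_assoc, hPP, Matrix.mul_one]
  have hSFi : F⁻¹ + Fᴴ = S * F⁻¹ := by
    rw [hSdef, Matrix.add_mul, Matrix.one_mul, Matrix.mul_assoc, hFF, Matrix.mul_one]
  have hFiΔ : F⁻¹ * Δ = S⁻¹ * (Fᴴ * T * Mt) + M * P := by
    rw [hΔdef, Matrix.mul_add]
    simp only [← Matrix.mul_assoc]
    rw [hFiF]
    simp only [Matrix.one_mul, Matrix.mul_assoc]
  have rhs : (F⁻¹ + Fᴴ) * (Δ * P⁻¹) = Fᴴ * T * (P * (1 + M)) - Fᴴ * T + S * M := by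
    calc (F⁻¹ + Fᴴ) * (Δ * P⁻¹) = S * (F⁻¹ * Δ) * P⁻¹ := by
          rw [hSFi]; simp only [Matrix.mul_assoc]
      _ = (Fᴴ * T * Mt + S * (M * P)) * P⁻¹ := by
          rw [hFiΔ, Matrix.mul_add, ← Matrix.mul_assoc S S⁻¹, hSS, Matrix.one_mul]
      _ = Fᴴ * T * (Mt * P⁻¹) + S * M := by
          rw [Matrix.add_mul]
          congr 1
          · simp only [Matrix.mul_assoc]
          · simp only [Matrix.mul_assoc]; rw [hPP, Matrix.mul_one]
      _ = Fᴴ * T * (P * (1 + M)) - Fᴴ * T + S * M := by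
          rw [hMtP, Matrix.mul_sub, Matrix.mul_one]
  have key : Fᴴ * (W * H - T) = S + (F⁻¹ + Fᴴ) * (Δ * P⁻¹) := by
    rw [lhs, rhs, hSdef]
    noncomm_ring
  -- structural facts for the entrywise argument
  have hPinv : P⁻¹.IsDiag := by
    have : P⁻¹ = Matrix.diagonal (Ring.inverse P.diag) := by
      conv_lhs => rw [← hPd.diagonal_diag]
      rw [Matrix.inv_diagonal]
    rw [this]
    exact Matrix.isDiag_diagonal _
  have hFlow : ∀ a b : Fin K, a < b → F⁻¹ a b = 0 := by
    have hbt : F.BlockTriangular (fun i : Fin K => OrderDual.toDual i) := by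
      intro i j hij
      have hji : i < j := OrderDual.toDual_lt_toDual.mp hij
      have hv : (i : ℕ) < (j : ℕ) := hji
      exact hFband i j (Or.inl (by omega))
    haveI := Matrix.invertibleOfIsUnitDet F hFdet
    intro a b hab
    exact Matrix.blockTriangular_inv_of_blockTriangular hbt (show OrderDual.toDual b < OrderDual.toDual a from hab)
  -- entrywise conclusion
  intro k ℓ hkl
  rw [key, Matrix.add_apply, hSdef, Matrix.add_apply]
  have h1 : (1 : Matrix (Fin K) (Fin K) ℂ) k ℓ = 0 := by
    apply Matrix.one_apply_ne
    intro h; subst h; omega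
  have h2 : (Fᴴ * F) k ℓ = 0 := by
    rw [Matrix.mul_apply]
    apply Finset.sum_eq_zero
    intro j _
    by_cases hj : ((j : ℕ) : ℤ) - ((k : ℕ) : ℤ) > (ν : ℤ)
    · rw [Matrix.conjTranspose_apply, hFband j k (Or.inr hj)]
      simp
    · rw [hFband j ℓ (Or.inl (by omega))]
      simp
  have h3 : ((F⁻¹ + Fᴴ) * (Δ * P⁻¹)) k ℓ = 0 := by
    rw [Matrix.mul_apply]
    apply Finset.sum_eq_zero
    intro j _
    by_cases hj : ((ℓ : ℕ) : ℤ) - ((j : ℕ) : ℤ) > 0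
    · have : (Δ * P⁻¹) j ℓ = 0 := by
        rw [Matrix.mul_apply]
        apply Finset.sum_eq_zero
        intro m _
        by_cases hm : m = ℓ
        · subst hm
          rw [hΔ j m (Or.inl hj)]
          simp
        · rw [hPinv hm]
          simp
      rw [this, mul_zero]
    · have hjk : ((j : ℕ) : ℤ) - ((k : ℕ) : ℤ) > (ν : ℤ) := by omega
      have h4 : F⁻¹ k j = 0 := hFlow k j (by
        have : (k : ℕ) < (j : ℕ) := by omega
        exact this)
      have h5 : Fᴴ k j = 0 := by
        rw [Matrix.conjTranspose_apply, hFband j k (Or.inr hjk)]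
        simp
      rw [Matrix.add_apply, h4, h5]
      simp
  rw [h1, h2, h3]
  simp
end

section
/- Let K ≥ 1, let M ∈ ℂ^{K×K} be Hermitian, M̃ ∈ ℂ^{K×K} Hermitian negative definite, P ∈ ℂ^{K×K} Hermitian, and let 𝒮 ⊆ {0,…,K−1}². Then the real-valued function G ↦ log det(I+G) + Tr(M(I+G)) + sup{ 2 Re Tr(PMR) + Tr((I+G)⁻¹ R M̃ Rᴴ) : R ∈ ℂ^{K×K} vanishing at every position outside 𝒮 } is concave on the convex set of Hermitian K×K matrices G with I+G positive definite (the supremum is finite for every such G since M̃ is negative definite). -/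
/-!
Write `A = 1 + G`. The log-determinant is concave on positive definite matrices: it is the
infimum of its tangent affine maps `A ↦ log det X + Re tr (A X⁻¹) - K`, by
`log det C ≤ Re tr C - K` applied to `C = X^{-1/2} A X^{-1/2}`. For `N = -M̃ ⪰ 0`, the matrix
fractional function `(A, R) ↦ Re tr (A⁻¹ R N Rᴴ)` is jointly convex: it is the supremum over `U`
of the maps `(A, R) ↦ 2 Re tr (R N Uᴴ) - Re tr (A U N Uᴴ)`, which are linear in `(A, R)` and
attain it at `U = A⁻¹ R` (the gap is `Re tr (A W N Wᴴ) ≥ 0` with `W = U - A⁻¹ R`). So the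
expression under the supremum is jointly concave in `(A, R)`, and maximizing it over `R` in the
convex set of matrices supported on `𝒮` gives a concave function of `A`; the supremum is finite
because `N` is invertible.
-/

open Matrix
open scoped ComplexOrder

section SupportingAffineMap

variable {E F : Type*} [AddCommGroup E] [Module ℝ E] [AddCommGroup F] [Module ℝ F]

theorem convexOn_of_supporting_affineMap {s : Set E} (hs : Convex ℝ s) {f : E → ℝ}
    (h : ∀ z ∈ s, ∃ g : E →ᵃ[ℝ] ℝ, g z = f z ∧ ∀ x ∈ s, g x ≤ f x) : ConvexOn ℝ s f := by
  refine ⟨hs, fun x hx y hy a b ha hb hab => ?_⟩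
  obtain ⟨g, hgz, hg⟩ := h _ (hs hx hy ha hb hab)
  calc f (a • x + b • y) = a • g x + b • g y := by rw [← hgz, Convex.combo_affine_apply hab]
    _ ≤ a • f x + b • f y := by gcongr <;> exact hg _ ‹_›

theorem concaveOn_of_supporting_affineMap {s : Set E} (hs : Convex ℝ s) {f : E → ℝ}
    (h : ∀ z ∈ s, ∃ g : E →ᵃ[ℝ] ℝ, g z = f z ∧ ∀ x ∈ s, f x ≤ g x) : ConcaveOn ℝ s f := by
  refine ⟨hs, fun x hx y hy a b ha hb hab => ?_⟩
  obtain ⟨g, hgz, hg⟩ := h _ (hs hx hy ha hb hab)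
  calc a • f x + b • f y ≤ a • g x + b • g y := by gcongr <;> exact hg _ ‹_›
    _ = f (a • x + b • y) := by rw [← hgz, Convex.combo_affine_apply hab]

open Set Pointwise in
theorem ConcaveOn.csSup_image_prod {s : Set E} {t : Set F} {f : E × F → ℝ}
    (hf : ConcaveOn ℝ (s ×ˢ t) f) (ht : t.Nonempty)
    (hbdd : ∀ x ∈ s, BddAbove ((fun y => f (x, y)) '' t)) :
    ConcaveOn ℝ s fun x => sSup ((fun y => f (x, y)) '' t) := by
  obtain ⟨y₀, hy₀⟩ := ht
  have hne : ∀ x, ((fun y => f (x, y)) '' t).Nonempty := fun x => ⟨_, y₀, hy₀, rfl⟩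
  have hs : Convex ℝ s := fun x₁ hx₁ x₂ hx₂ a b ha hb hab => by
    simpa using (hf.1 (mk_mem_prod hx₁ hy₀) (mk_mem_prod hx₂ hy₀) ha hb hab).1
  refine ⟨hs, fun x₁ hx₁ x₂ hx₂ a b ha hb hab => ?_⟩
  simp only [smul_eq_mul]
  rw [← smul_eq_mul a, ← smul_eq_mul b, ← Real.sSup_smul_of_nonneg ha,
    ← Real.sSup_smul_of_nonneg hb, ← csSup_add (hne _).smul_set ((hbdd _ hx₁).smul_of_nonneg ha)
      (hne _).smul_set ((hbdd _ hx₂).smul_of_nonneg hb)]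
  refine csSup_le ((hne _).smul_set.add (hne _).smul_set) ?_
  rintro _ ⟨_, ⟨_, ⟨y₁, hy₁, rfl⟩, rfl⟩, _, ⟨_, ⟨y₂, hy₂, rfl⟩, rfl⟩, rfl⟩
  have hmem := hf.1 (mk_mem_prod hx₁ hy₁) (mk_mem_prod hx₂ hy₂) ha hb hab
  calc a • f (x₁, y₁) + b • f (x₂, y₂) ≤ f (a • (x₁, y₁) + b • (x₂, y₂)) :=
        hf.2 (mk_mem_prod hx₁ hy₁) (mk_mem_prod hx₂ hy₂) ha hb hab
    _ ≤ _ := le_csSup (hbdd _ (hs hx₁ hx₂ ha hb hab)) ⟨_, hmem.2, rfl⟩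

end SupportingAffineMap

namespace Matrix

variable {𝕜 : Type*} [RCLike 𝕜] {m n : Type*}

theorem convex_setOf_posDef : Convex ℝ {A : Matrix n n 𝕜 | A.PosDef} :=
  convex_iff_forall_pos.2 fun _ hA _ hB _ _ ha hb _ => (hA.smul ha).add (hB.smul hb)

variable [Fintype m] [Fintype n]

noncomputable def reTraceMul (C : Matrix n m 𝕜) : Matrix m n 𝕜 →ₗ[ℝ] ℝ :=
  RCLike.reLm ∘ₗ traceLinearMap m ℝ 𝕜 ∘ₗ mulRightLinearMap m ℝ C

@[simp]
theorem reTraceMul_apply (C : Matrix n m 𝕜) (Y : Matrix m n 𝕜) :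
    reTraceMul C Y = RCLike.re (Y * C).trace := rfl

variable [DecidableEq m]

theorem PosSemidef.re_trace_mul_nonneg {A B : Matrix m m 𝕜} (hA : A.PosSemidef)
    (hB : B.PosSemidef) : 0 ≤ RCLike.re (A * B).trace := by
  open scoped MatrixOrder in
  obtain ⟨S, hS, rfl⟩ : ∃ S : Matrix m m 𝕜, S.IsHermitian ∧ A = S * S :=
    ⟨CFC.sqrt A, (CFC.sqrt_nonneg A).posSemidef.1, (CFC.sqrt_mul_sqrt_self A hA.nonneg).symm⟩
  have h := (hB.mul_mul_conjTranspose_same S).trace_nonneg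
  rw [hS.eq, trace_mul_cycle] at h
  exact (RCLike.nonneg_iff.1 h).1

theorem PosDef.log_norm_det_le_re_trace_sub_card {C : Matrix m m 𝕜} (hC : C.PosDef) :
    Real.log ‖C.det‖ ≤ RCLike.re C.trace - Fintype.card m := by
  have hpos := hC.eigenvalues_pos
  rw [hC.1.det_eq_prod_eigenvalues, hC.1.trace_eq_sum_eigenvalues]
  simp only [norm_prod, RCLike.norm_ofReal, map_sum, RCLike.ofReal_re, abs_of_pos (hpos _)]
  rw [Real.log_prod fun i _ => (hpos i).ne']
  calc ∑ i, Real.log (hC.1.eigenvalues i) ≤ ∑ i, (hC.1.eigenvalues i - 1) :=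
        Finset.sum_le_sum fun i _ => Real.log_le_sub_one_of_pos (hpos i)
    _ = _ := by simp [Finset.sum_sub_distrib]

theorem PosDef.log_norm_det_le_log_norm_det_add_re_trace {A X : Matrix m m 𝕜} (hA : A.PosDef)
    (hX : X.PosDef) :
    Real.log ‖A.det‖ ≤ Real.log ‖X.det‖ + RCLike.re (A * X⁻¹).trace - Fintype.card m := by
  open scoped MatrixOrder in
  obtain ⟨T, hT, hTT⟩ : ∃ T : Matrix m m 𝕜, T.IsHermitian ∧ T * T = X⁻¹ :=
    ⟨CFC.sqrt X⁻¹, (CFC.sqrt_nonneg _).posSemidef.1,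
      CFC.sqrt_mul_sqrt_self _ hX.inv.posSemidef.nonneg⟩
  have hdetT : T.det * T.det = X.det⁻¹ := by
    rw [← det_mul, hTT, det_nonsing_inv, Ring.inverse_eq_inv']
  have hTunit : IsUnit T := (isUnit_iff_isUnit_det T).2 <| isUnit_of_mul_isUnit_left <| by
    rw [← det_mul, hTT]
    exact (isUnit_iff_isUnit_det _).1 hX.inv.isUnit
  have hC : (T * A * T).PosDef := by
    simpa [hT.eq] using hA.conjTranspose_mul_mul_same (mulVec_injective_iff_isUnit.2 hTunit)
  have hdetC : ‖(T * A * T).det‖ = ‖A.det‖ / ‖X.det‖ := by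
    rw [det_mul, det_mul, mul_right_comm, hdetT, norm_mul, norm_inv, inv_mul_eq_div]
  have htrC : (T * A * T).trace = (A * X⁻¹).trace := by
    rw [trace_mul_cycle, hTT, trace_mul_comm]
  have h := hC.log_norm_det_le_re_trace_sub_card
  rw [hdetC, htrC, Real.log_div (norm_ne_zero_iff.2 hA.det_pos.ne')
    (norm_ne_zero_iff.2 hX.det_pos.ne')] at h
  linarith

theorem concaveOn_log_norm_det :
    ConcaveOn ℝ {A : Matrix m m 𝕜 | A.PosDef} fun A => Real.log ‖A.det‖ := by
  have hconv : Convex ℝ {A : Matrix m m 𝕜 | A.PosDef} := convex_setOf_posDef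
  refine concaveOn_of_supporting_affineMap hconv fun X hX => ?_
  let g : Matrix m m 𝕜 →ᵃ[ℝ] ℝ := (reTraceMul X⁻¹).toAffineMap +
    AffineMap.const ℝ (Matrix m m 𝕜) (Real.log ‖X.det‖ - Fintype.card m)
  refine ⟨g, ?_, fun A hA => ?_⟩
  · simp [g, mul_nonsing_inv _ ((isUnit_iff_isUnit_det X).1 hX.isUnit)]
  · simp only [g, AffineMap.coe_add, Pi.add_apply, LinearMap.coe_toAffineMap,
      AffineMap.const_apply, reTraceMul_apply]
    linarith [hA.log_norm_det_le_log_norm_det_add_re_trace hX]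

theorem PosDef.two_re_trace_sub_re_trace_le {A : Matrix m m 𝕜} {N : Matrix n n 𝕜}
    (hA : A.PosDef) (hN : N.PosSemidef) (R U : Matrix m n 𝕜) :
    2 * RCLike.re (R * N * Uᴴ).trace - RCLike.re (A * U * N * Uᴴ).trace ≤
      RCLike.re (A⁻¹ * R * N * Rᴴ).trace := by
  have hdet : IsUnit A.det := (isUnit_iff_isUnit_det A).1 hA.isUnit
  set W := U - A⁻¹ * R
  have hAW : A * W = A * U - R := by rw [Matrix.mul_sub, mul_nonsing_inv_cancel_left _ _ hdet]
  have hWH : Wᴴ = Uᴴ - Rᴴ * A⁻¹ := by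
    rw [conjTranspose_sub, conjTranspose_mul, hA.1.inv.eq]
  have hcross : RCLike.re (A * U * N * (Rᴴ * A⁻¹)).trace = RCLike.re (R * N * Uᴴ).trace := by
    rw [← Matrix.mul_assoc, trace_mul_comm, ← Matrix.mul_assoc, ← Matrix.mul_assoc,
      nonsing_inv_mul_cancel_left _ _ hdet, ← RCLike.conj_re, ← RCLike.star_def,
      ← trace_conjTranspose]
    simp [Matrix.mul_assoc, hN.1.eq]
  have hsq : (R * N * (Rᴴ * A⁻¹)).trace = (A⁻¹ * R * N * Rᴴ).trace := by
    rw [← Matrix.mul_assoc, trace_mul_comm, ← Matrix.mul_assoc, ← Matrix.mul_assoc]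
  have h := hA.posSemidef.re_trace_mul_nonneg (hN.mul_mul_conjTranspose_same W)
  rw [← Matrix.mul_assoc, ← Matrix.mul_assoc, hAW, hWH] at h
  simp only [Matrix.mul_sub, Matrix.sub_mul, trace_sub, map_sub, hcross, hsq] at h
  linarith

section

open Set

theorem convexOn_re_trace_inv_mul_mul_conjTranspose {N : Matrix n n 𝕜} (hN : N.PosSemidef) :
    ConvexOn ℝ ({A : Matrix m m 𝕜 | A.PosDef} ×ˢ univ)
      fun p : Matrix m m 𝕜 × Matrix m n 𝕜 => RCLike.re (p.1⁻¹ * p.2 * N * p.2ᴴ).trace := by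
  have hconv : Convex ℝ ({A : Matrix m m 𝕜 | A.PosDef} ×ˢ (univ : Set (Matrix m n 𝕜))) :=
    convex_setOf_posDef.prod convex_univ
  refine convexOn_of_supporting_affineMap hconv fun ⟨A, R⟩ ⟨hA, _⟩ => ?_
  set U := A⁻¹ * R
  let g : Matrix m m 𝕜 × Matrix m n 𝕜 →ᵃ[ℝ] ℝ :=
    (2 • (reTraceMul (N * Uᴴ)).comp (LinearMap.snd ℝ _ _) -
      (reTraceMul (U * N * Uᴴ)).comp (LinearMap.fst ℝ _ _)).toAffineMap
  refine ⟨g, ?_, fun ⟨A', R'⟩ ⟨hA', _⟩ => ?_⟩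
  · have hAU : A * (U * N * Uᴴ) = R * (N * Uᴴ) := by
      simp only [U, Matrix.mul_assoc, mul_nonsing_inv_cancel_left _ _
        ((isUnit_iff_isUnit_det A).1 hA.isUnit)]
    have htr : (R * (N * Uᴴ)).trace = (A⁻¹ * R * N * Rᴴ).trace := by
      rw [conjTranspose_mul, hA.1.inv.eq, ← Matrix.mul_assoc, ← Matrix.mul_assoc, trace_mul_comm,
        ← Matrix.mul_assoc, ← Matrix.mul_assoc]
    simp only [g, LinearMap.coe_toAffineMap, LinearMap.sub_apply, LinearMap.smul_apply,
      LinearMap.comp_apply, LinearMap.coe_snd, LinearMap.coe_fst, reTraceMul_apply, hAU, htr]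
    ring
  · simpa [g, Matrix.mul_assoc] using hA'.two_re_trace_sub_re_trace_le hN R' U

theorem concaveOn_two_re_trace_add_re_trace_inv_mul {Mt : Matrix n n 𝕜} (hMt : (-Mt).PosSemidef)
    (B : Matrix n m 𝕜) :
    ConcaveOn ℝ ({A : Matrix m m 𝕜 | A.PosDef} ×ˢ univ) fun p : Matrix m m 𝕜 × Matrix m n 𝕜 =>
      2 * RCLike.re (B * p.2).trace + RCLike.re (p.1⁻¹ * p.2 * Mt * p.2ᴴ).trace := by
  have hconv : Convex ℝ ({A : Matrix m m 𝕜 | A.PosDef} ×ˢ (univ : Set (Matrix m n 𝕜))) :=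
    convex_setOf_posDef.prod convex_univ
  have hlin := (2 • (reTraceMul B).comp (LinearMap.snd ℝ (Matrix m m 𝕜) (Matrix m n 𝕜))).concaveOn
    hconv
  refine (hlin.sub (convexOn_re_trace_inv_mul_mul_conjTranspose hMt)).congr fun p _ => ?_
  simp [trace_mul_comm B, sub_eq_add_neg]

end

theorem PosDef.bddAbove_range_two_re_trace_add_re_trace_inv_mul [DecidableEq n]
    {A : Matrix m m 𝕜} {Mt : Matrix n n 𝕜} (hA : A.PosDef) (hMt : (-Mt).PosDef)
    (B : Matrix n m 𝕜) :
    BddAbove (Set.range fun R : Matrix m n 𝕜 =>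
      2 * RCLike.re (B * R).trace + RCLike.re (A⁻¹ * R * Mt * Rᴴ).trace) := by
  obtain ⟨U, hU⟩ : ∃ U : Matrix m n 𝕜, Uᴴ = (-Mt)⁻¹ * B := ⟨_, conjTranspose_conjTranspose _⟩
  refine ⟨RCLike.re (A * U * -Mt * Uᴴ).trace, ?_⟩
  rintro _ ⟨R, rfl⟩
  have hRB : (R * -Mt * Uᴴ).trace = (B * R).trace := by
    rw [hU, Matrix.mul_assoc, mul_nonsing_inv_cancel_left _ _
      ((isUnit_iff_isUnit_det _).1 hMt.isUnit), trace_mul_comm]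
  have h := hA.two_re_trace_sub_re_trace_le hMt.posSemidef R U
  rw [hRB] at h
  simp only [Matrix.mul_neg, Matrix.neg_mul, trace_neg, map_neg] at h ⊢
  linarith

end Matrix

theorem gmi_method2_concave_general {K : ℕ}
    (M Mt P : Matrix (Fin K) (Fin K) ℂ)
    (hMt : (-Mt).PosDef)
    (S : Set (Fin K × Fin K)) :
    ConcaveOn ℝ {G : Matrix (Fin K) (Fin K) ℂ | G.IsHermitian ∧ (1 + G).PosDef}
      (fun G => (Complex.log ((1 + G).det)).re + (Matrix.trace (M * (1 + G))).re
        + sSup {r : ℝ | ∃ R : Matrix (Fin K) (Fin K) ℂ,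
            (∀ k ℓ : Fin K, (k, ℓ) ∉ S → R k ℓ = 0) ∧
            r = 2 * (Matrix.trace (P * M * R)).re
              + (Matrix.trace ((1 + G)⁻¹ * R * Mt * Rᴴ)).re}) := by
  set T := {R : Matrix (Fin K) (Fin K) ℂ | ∀ k ℓ, (k, ℓ) ∉ S → R k ℓ = 0}
  have hT : Convex ℝ T := fun R₁ h₁ R₂ h₂ a b _ _ _ k ℓ hkℓ => by simp [h₁ k ℓ hkℓ, h₂ k ℓ hkℓ]
  have hPD : Convex ℝ {A : Matrix (Fin K) (Fin K) ℂ | A.PosDef} := convex_setOf_posDef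
  have hsup := ((concaveOn_two_re_trace_add_re_trace_inv_mul hMt.posSemidef (P * M)).subset
      (Set.prod_mono subset_rfl (Set.subset_univ T)) (hPD.prod hT)).csSup_image_prod
    ⟨0, fun _ _ _ => rfl⟩ fun A hA =>
      (hA.bddAbove_range_two_re_trace_add_re_trace_inv_mul hMt (P * M)).mono
        (Set.image_subset_range _ _)
  have hdom : {G : Matrix (Fin K) (Fin K) ℂ | G.IsHermitian ∧ (1 + G).PosDef} =
      (fun G => 1 + G) ⁻¹' {A | A.PosDef} := by
    ext G
    refine ⟨And.right, fun h => ⟨?_, h⟩⟩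
    simpa using h.1.sub isHermitian_one
  rw [hdom]
  refine ((((concaveOn_log_norm_det.add ((reTraceMul M).concaveOn hPD)).add hsup).translate_right
    1).congr fun G _ => ?_)
  simp only [Function.comp_apply, Pi.add_apply, reTraceMul_apply, Complex.log_re,
    trace_mul_comm (1 + G) M]
  congr 2
  ext r
  exact ⟨fun ⟨R, hR, h⟩ => ⟨R, hR, h.symm⟩, fun ⟨R, hR, h⟩ => ⟨R, hR, h.symm⟩⟩

/-- Appendix G. The Method II GMI with front-end filter and interference
cancelation matrix optimized out,
`G ↦ log det(I+G) + Tr(M(I+G)) + sup_R { 2 Re Tr(PMR) + Tr((I+G)⁻¹ R M̃ Rᴴ) }`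
(the supremum over `R` supported on `𝒮`), is concave on the convex set of Hermitian `G`
with `I+G` positive definite. -/
theorem gmi_method2_concave {K : ℕ} (hK : 1 ≤ K)
    (M Mt P : Matrix (Fin K) (Fin K) ℂ)
    (hM : M.IsHermitian) (hMt : (-Mt).PosDef) (hP : P.IsHermitian)
    (S : Set (Fin K × Fin K)) :
    ConcaveOn ℝ {G : Matrix (Fin K) (Fin K) ℂ | G.IsHermitian ∧ (1 + G).PosDef}
      (fun G => (Complex.log ((1 + G).det)).re + (Matrix.trace (M * (1 + G))).re
        + sSup {r : ℝ | ∃ R : Matrix (Fin K) (Fin K) ℂ,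
            (∀ k ℓ : Fin K, (k, ℓ) ∉ S → R k ℓ = 0) ∧
            r = 2 * (Matrix.trace (P * M * R)).re
              + (Matrix.trace ((1 + G)⁻¹ * R * Mt * Rᴴ)).re}) :=
  gmi_method2_concave_general M Mt P hMt S
end

section
/- Let ν ≥ 1 and let M : [−π, π] → ℝ be continuous with M(ω) < 0 for all ω. Define φ(ω) := (e^{iω}, e^{i2ω}, …, e^{iνω}) ∈ ℂ^ν, τ₀ := (1/2π)∫_{−π}^{π} M(ω) dω, τ₁ := (1/2π)∫_{−π}^{π} M(ω)φ(ω) dω ∈ ℂ^ν, and τ₂ := (1/2π)∫_{−π}^{π} M(ω)φ(ω)φ(ω)ᴴ dω (a Hermitian ν×ν matrix). Then: (i) τ₂ is negative definite and τ₁ᴴτ₂⁻¹τ₁ − τ₀ > 0; (ii) setting u₀* := (τ₁ᴴτ₂⁻¹τ₁ − τ₀)^{−1/2} and û* := −u₀* τ₁ᴴτ₂⁻¹ ∈ ℂ^ν, the function J(u₀, û) := 1 + 2 log u₀ + (1/2π)∫_{−π}^{π} M(ω) |u₀ + Σ_{k=1}^{ν} û_k e^{ikω}|² dω satisfies J(u₀,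 û) ≤ J(u₀*, û*) = 2 log u₀* for all u₀ > 0 and û ∈ ℂ^ν. -/
/-!
Expanding `|U|²` against the weight `M` turns `(1/2π)∫ M |U|²` into the Hermitian form
`τ₀ u₀² + 2 u₀ Re (û ⬝ τ₁) + û ⬝ τ₂ ū`. A nonzero causal polynomial cannot vanish on all of
`[-π, π]` (Parseval), so `M < 0` makes this form negative definite, in particular `τ₂ < 0`.
Completing the square in `û` gives
`J(u₀, û) = 1 + 2 log u₀ - c u₀² + Q(ū + u₀ τ₂⁻¹ τ₁)`, where `c = τ₁ᴴ τ₂⁻¹ τ₁ - τ₀` and `Q ≤ 0`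
is the form of `τ₂`, which vanishes at `û*`. Evaluating at `u₀ = 1`, `û = û*` shows `c > 0`, and
`log x ≤ x - 1` bounds `1 + 2 log u₀ - c u₀²` by `-log c = 2 log u₀*`.
-/

open Matrix
open scoped ComplexOrder

open Complex Set intervalIntegral
open scoped Real

theorem norm_ofReal_add_sq (r : ℝ) (z : ℂ) :
    ‖(r : ℂ) + z‖ ^ 2 = r ^ 2 + 2 * r * z.re + ‖z‖ ^ 2 := by
  simp only [Complex.sq_norm, normSq_apply, add_re, add_im, ofReal_re, ofReal_im]
  ring

section WeightedExpansion

variable {ι : Type*} [Fintype ι] {a b : ℝ} {W : ℝ → ℝ} {f : ι → ℝ → ℂ}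

theorem ofReal_integral_mul_norm_sum_sq (hW : ContinuousOn W (uIcc a b))
    (hf : ∀ i, Continuous (f i)) (c : ι → ℂ) :
    ((∫ ω in a..b, W ω * ‖∑ i, c i * f i ω‖ ^ 2 : ℝ) : ℂ) =
      ∑ i, ∑ j, c i * star (c j) * ∫ ω in a..b, (W ω : ℂ) * f i ω * star (f j ω) := by
  have hcont : ∀ i j, ContinuousOn (fun ω => c i * star (c j) * ((W ω : ℂ) * f i ω * star (f j ω)))
      (uIcc a b) := fun i j => by fun_prop
  have hpt : ∀ ω, ((W ω * ‖∑ i, c i * f i ω‖ ^ 2 : ℝ) : ℂ) =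
      ∑ i, ∑ j, c i * star (c j) * ((W ω : ℂ) * f i ω * star (f j ω)) := by
    intro ω
    rw [ofReal_mul, ofReal_pow, ← mul_conj', ← star_def, star_sum, Finset.sum_mul_sum,
      Finset.mul_sum]
    refine Finset.sum_congr rfl fun i _ => ?_
    rw [Finset.mul_sum]
    refine Finset.sum_congr rfl fun j _ => ?_
    rw [star_mul']
    ring
  simp_rw [← integral_ofReal, hpt]
  rw [integral_finsetSum fun i _ =>
    (continuousOn_finsetSum _ fun j _ => hcont i j).intervalIntegrable]
  refine Finset.sum_congr rfl fun i _ => ?_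
  rw [integral_finsetSum fun j _ => (hcont i j).intervalIntegrable]
  simp only [integral_const_mul]

theorem integral_mul_norm_ofReal_add_sum_sq (hW : ContinuousOn W (uIcc a b))
    (hf : ∀ i, Continuous (f i)) (u₀ : ℝ) (c : ι → ℂ) :
    ∫ ω in a..b, W ω * ‖(u₀ : ℂ) + ∑ i, c i * f i ω‖ ^ 2 =
      u₀ ^ 2 * (∫ ω in a..b, W ω)
        + 2 * u₀ * (∑ i, c i * ∫ ω in a..b, (W ω : ℂ) * f i ω).re
        + ∫ ω in a..b, W ω * ‖∑ i, c i * f i ω‖ ^ 2 := by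
  have hcont : ∀ i, ContinuousOn (fun ω => c i * ((W ω : ℂ) * f i ω)) (uIcc a b) :=
    fun i => by fun_prop
  have hWS : ∫ ω in a..b, (W ω : ℂ) * ∑ i, c i * f i ω =
      ∑ i, c i * ∫ ω in a..b, (W ω : ℂ) * f i ω := by
    simp_rw [Finset.mul_sum, mul_left_comm _ (c _)]
    rw [integral_finsetSum fun i _ => (hcont i).intervalIntegrable]
    simp only [integral_const_mul]
  have hre : ∫ ω in a..b, W ω * (∑ i, c i * f i ω).re =
      (∫ ω in a..b, (W ω : ℂ) * ∑ i, c i * f i ω).re := by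
    simpa only [RCLike.re_to_complex, re_ofReal_mul] using intervalIntegral_re
      (f := fun ω => (W ω : ℂ) * ∑ i, c i * f i ω)
      (ContinuousOn.intervalIntegrable (by fun_prop))
  simp_rw [norm_ofReal_add_sq, mul_add, mul_comm (W _) (u₀ ^ 2), mul_left_comm (W _) (2 * u₀)]
  rw [integral_add, integral_add, integral_const_mul, integral_const_mul, hre, hWS]
  all_goals
    apply ContinuousOn.intervalIntegrable
    fun_prop
end WeightedExpansion

theorem integral_mul_norm_sq_neg {a b : ℝ} (hab : a < b) {W : ℝ → ℝ}
    (hW : ContinuousOn W (Icc a b)) (hW_neg : ∀ ω ∈ Icc a b, W ω < 0) {g : ℝ → ℂ}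
    (hg : ContinuousOn g (Icc a b)) (hg_ne : ∃ ω ∈ Icc a b, g ω ≠ 0) :
    ∫ ω in a..b, W ω * ‖g ω‖ ^ 2 < 0 := by
  obtain ⟨ω₀, hω₀, hgω₀⟩ := hg_ne
  have hpos : 0 < ∫ ω in a..b, -(W ω * ‖g ω‖ ^ 2) :=
    integral_pos hab (by fun_prop)
      (fun ω hω => neg_nonneg.2 <| mul_nonpos_of_nonpos_of_nonneg
        (hW_neg ω (Ioc_subset_Icc_self hω)).le (by positivity))
      ⟨ω₀, hω₀, neg_pos.2 <| mul_neg_of_neg_of_pos (hW_neg ω₀ hω₀) (by positivity)⟩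
  rw [integral_neg] at hpos
  linarith

theorem Matrix.IsHermitian.re_dotProduct_mulVec_add_smul_inv_mulVec {n : Type*} [Fintype n]
    [DecidableEq n] {A : Matrix n n ℂ} (hA : A.IsHermitian) (hdet : IsUnit A.det)
    (x b : n → ℂ) (t : ℝ) :
    (star (x + (t : ℂ) • (A⁻¹ *ᵥ b)) ⬝ᵥ A *ᵥ (x + (t : ℂ) • (A⁻¹ *ᵥ b))).re =
      (star x ⬝ᵥ A *ᵥ x).re + 2 * t * (star x ⬝ᵥ b).re + t ^ 2 * (star b ⬝ᵥ A⁻¹ *ᵥ b).re := by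
  have hAz : A *ᵥ (A⁻¹ *ᵥ b) = b := by
    rw [mulVec_mulVec, mul_nonsing_inv _ hdet, one_mulVec]
  have hzA : star (A⁻¹ *ᵥ b) ⬝ᵥ A *ᵥ x = star (star x ⬝ᵥ b) := by
    rw [star_mulVec, hA.inv.eq, dotProduct_mulVec, vecMul_vecMul,
      nonsing_inv_mul _ hdet, vecMul_one, star_dotProduct]
  have hzb : star (A⁻¹ *ᵥ b) ⬝ᵥ b = star b ⬝ᵥ A⁻¹ *ᵥ b := by
    rw [star_mulVec, hA.inv.eq, dotProduct_mulVec]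
  rw [star_add, star_smul, mulVec_add, mulVec_smul, hAz, add_dotProduct, dotProduct_add,
    dotProduct_add, dotProduct_smul, smul_dotProduct, smul_dotProduct, dotProduct_smul, hzA, hzb]
  simp only [smul_eq_mul, star_def, conj_ofReal, add_re, re_ofReal_mul, conj_re]
  ring

theorem mul_rpow_neg_half_sq {c : ℝ} (hc : 0 < c) : c * (c ^ (-(1 / 2 : ℝ))) ^ 2 = 1 := by
  rw [← Real.rpow_natCast, ← Real.rpow_mul hc.le]
  norm_num [Real.rpow_neg_one, hc.ne']

theorem one_add_two_mul_log_sub_mul_sq_le {c u : ℝ} (hc : 0 < c) (hu : 0 < u) :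
    1 + 2 * Real.log u - c * u ^ 2 ≤ 2 * Real.log (c ^ (-(1 / 2 : ℝ))) := by
  have h := Real.log_le_sub_one_of_pos (mul_pos hc (pow_pos hu 2))
  rw [Real.log_mul hc.ne' (pow_ne_zero 2 hu.ne'), Real.log_pow] at h
  rw [Real.log_rpow hc]
  push_cast at h
  linarith

theorem uIcc_neg_pi_pi : uIcc (-π) π = Icc (-π) π := uIcc_of_le (neg_le_self Real.pi_pos.le)

theorem integral_exp_I_mul_intCast_mul (n : ℤ) :
    ∫ ω in -π..π, exp (I * n * ω) = if n = 0 then ((2 * π : ℝ) : ℂ) else 0 := by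
  split_ifs with hn
  · simp [hn]
    ring
  · have hIn : I * n ≠ 0 := mul_ne_zero I_ne_zero (by exact_mod_cast hn)
    have hperiod : exp (I * n * π) = exp (I * n * ↑(-π)) := by
      rw [← mul_one (exp (I * n * ↑(-π))), ← exp_int_mul_two_pi_mul_I n, ← Complex.exp_add]
      push_cast
      ring_nf
    rw [integral_exp_mul_complex hIn, hperiod, sub_self, zero_div]

noncomputable def harmonics (ν : ℕ) (ω : ℝ) (k : Fin ν) : ℂ :=
  exp (I * (((k : ℕ) : ℂ) + 1) * ω)

section Harmonics

variable {ν : ℕ}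

@[fun_prop]
theorem continuous_harmonics (k : Fin ν) : Continuous fun ω => harmonics ν ω k := by
  unfold harmonics
  fun_prop

theorem integral_harmonics (k : Fin ν) : ∫ ω in -π..π, harmonics ν ω k = 0 := by
  have h := integral_exp_I_mul_intCast_mul ((k : ℕ) + 1)
  rw [if_neg (by omega)] at h
  simpa [harmonics] using h

theorem harmonics_mul_star (ω : ℝ) (k l : Fin ν) :
    harmonics ν ω k * star (harmonics ν ω l) = exp (I * (((k : ℕ) - (l : ℕ) : ℤ) : ℂ) * ω) := by
  rw [harmonics, harmonics, star_def, ← exp_conj, ← Complex.exp_add]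
  congr 1
  simp only [map_mul, map_add, conj_I, conj_ofReal, map_natCast, map_one]
  push_cast
  ring

theorem integral_harmonics_mul_star (k l : Fin ν) :
    ∫ ω in -π..π, harmonics ν ω k * star (harmonics ν ω l) =
      if k = l then ((2 * π : ℝ) : ℂ) else 0 := by
  simp only [harmonics_mul_star, integral_exp_I_mul_intCast_mul, sub_eq_zero, Nat.cast_inj,
    Fin.val_inj]

theorem integral_norm_ofReal_add_sum_harmonics_sq (u₀ : ℝ) (c : Fin ν → ℂ) :
    ∫ ω in -π..π, ‖(u₀ : ℂ) + ∑ k, c k * harmonics ν ω k‖ ^ 2 =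
      2 * π * (u₀ ^ 2 + ∑ k, ‖c k‖ ^ 2) := by
  have hS : ∫ ω in -π..π, ‖∑ k, c k * harmonics ν ω k‖ ^ 2 = 2 * π * ∑ k, ‖c k‖ ^ 2 := by
    have h := ofReal_integral_mul_norm_sum_sq (W := fun _ => 1) (a := -π) (b := π)
      continuousOn_const continuous_harmonics c
    simp only [one_mul, ofReal_one, integral_harmonics_mul_star, mul_ite, mul_zero,
      Finset.sum_ite_eq, Finset.mem_univ, if_true] at h
    simp only [star_def, mul_conj'] at h
    rw [Finset.mul_sum]
    exact_mod_cast h.trans (Finset.sum_congr rfl fun k _ => mul_comm _ _)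
  have h := integral_mul_norm_ofReal_add_sum_sq (W := fun _ => 1) (a := -π) (b := π)
    continuousOn_const continuous_harmonics u₀ c
  simp only [one_mul, ofReal_one, integral_harmonics, mul_zero, Finset.sum_const_zero, zero_re,
    integral_const, smul_eq_mul, hS] at h
  rw [h]
  ring

theorem exists_ofReal_add_sum_harmonics_ne_zero {u₀ : ℝ} {c : Fin ν → ℂ} (h : u₀ ≠ 0 ∨ c ≠ 0) :
    ∃ ω ∈ Icc (-π) π, (u₀ : ℂ) + ∑ k, c k * harmonics ν ω k ≠ 0 := by
  by_contra! hzero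
  have h0 : ∫ ω in -π..π, ‖(u₀ : ℂ) + ∑ k, c k * harmonics ν ω k‖ ^ 2 = 0 := by
    rw [integral_congr (g := fun _ => (0 : ℝ)), integral_zero]
    intro ω hω
    rw [uIcc_neg_pi_pi] at hω
    simp [hzero ω hω]
  rw [integral_norm_ofReal_add_sum_harmonics_sq, mul_eq_zero, or_iff_right Real.two_pi_pos.ne',
    add_eq_zero_iff_of_nonneg (sq_nonneg _) (by positivity),
    Finset.sum_eq_zero_iff_of_nonneg fun k _ => by positivity] at h0
  rcases h with h | h
  · exact h (pow_eq_zero_iff two_ne_zero |>.1 h0.1)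
  · exact h (funext fun k => by simpa using h0.2 k (Finset.mem_univ k))

end Harmonics

/-- `spectralMean`, `spectralMoments`, `spectralGram` and `gmiObjective` are the paper's
`τ₀`, `τ₁`, `τ₂` and `J`. -/
noncomputable def spectralMean (M : ℝ → ℝ) : ℝ :=
  (1 / (2 * π)) * ∫ ω in -π..π, M ω

noncomputable def spectralMoments (ν : ℕ) (M : ℝ → ℝ) (k : Fin ν) : ℂ :=
  ((1 / (2 * π) : ℝ) : ℂ) * ∫ ω in -π..π, (M ω : ℂ) * harmonics ν ω k

noncomputable def spectralGram (ν : ℕ) (M : ℝ → ℝ) : Matrix (Fin ν) (Fin ν) ℂ :=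
  of fun k l => ((1 / (2 * π) : ℝ) : ℂ) *
    ∫ ω in -π..π, (M ω : ℂ) * harmonics ν ω k * star (harmonics ν ω l)

noncomputable def spectralGap (ν : ℕ) (M : ℝ → ℝ) : ℝ :=
  (star (spectralMoments ν M) ⬝ᵥ (spectralGram ν M)⁻¹ *ᵥ spectralMoments ν M).re - spectralMean M

noncomputable def gmiObjective (ν : ℕ) (M : ℝ → ℝ) (u₀ : ℝ) (uh : Fin ν → ℂ) : ℝ :=
  1 + 2 * Real.log u₀ +
    (1 / (2 * π)) * ∫ ω in -π..π, M ω * ‖(u₀ : ℂ) + ∑ k, uh k * harmonics ν ω k‖ ^ 2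

section Spectral

variable {ν : ℕ} {M : ℝ → ℝ}

theorem dotProduct_spectralGram_mulVec_star (hM : ContinuousOn M (Icc (-π) π)) (uh : Fin ν → ℂ) :
    uh ⬝ᵥ spectralGram ν M *ᵥ star uh =
      (((1 / (2 * π)) * ∫ ω in -π..π, M ω * ‖∑ k, uh k * harmonics ν ω k‖ ^ 2 : ℝ) : ℂ) := by
  rw [ofReal_mul, ofReal_integral_mul_norm_sum_sq (uIcc_neg_pi_pi ▸ hM) continuous_harmonics,
    Finset.mul_sum]
  simp only [dotProduct, mulVec, spectralGram, of_apply, Pi.star_apply, Finset.mul_sum]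
  refine Finset.sum_congr rfl fun k _ => Finset.sum_congr rfl fun l _ => ?_
  ring

theorem integral_mul_norm_sq_eq_spectral (hM : ContinuousOn M (Icc (-π) π)) (u₀ : ℝ)
    (uh : Fin ν → ℂ) :
    (1 / (2 * π)) * ∫ ω in -π..π, M ω * ‖(u₀ : ℂ) + ∑ k, uh k * harmonics ν ω k‖ ^ 2 =
      spectralMean M * u₀ ^ 2 + 2 * u₀ * (uh ⬝ᵥ spectralMoments ν M).re
        + (uh ⬝ᵥ spectralGram ν M *ᵥ star uh).re := by
  have hmom : uh ⬝ᵥ spectralMoments ν M =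
      ((1 / (2 * π) : ℝ) : ℂ) * ∑ k, uh k * ∫ ω in -π..π, (M ω : ℂ) * harmonics ν ω k := by
    simp only [dotProduct, spectralMoments, Finset.mul_sum]
    exact Finset.sum_congr rfl fun k _ => by ring
  rw [integral_mul_norm_ofReal_add_sum_sq (uIcc_neg_pi_pi ▸ hM) continuous_harmonics,
    dotProduct_spectralGram_mulVec_star hM, ofReal_re, hmom, re_ofReal_mul, spectralMean]
  ring

theorem isHermitian_spectralGram : (spectralGram ν M).IsHermitian := by
  ext k l
  simp only [conjTranspose_apply, spectralGram, of_apply, star_mul', star_def, conj_ofReal,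
    ← intervalIntegral_conj, map_mul, conj_conj]
  congr 1
  refine integral_congr fun ω _ => ?_
  ring

theorem posDef_neg_spectralGram (hM : ContinuousOn M (Icc (-π) π))
    (hM_neg : ∀ ω ∈ Icc (-π) π, M ω < 0) : (-spectralGram ν M).PosDef := by
  refine .of_dotProduct_mulVec_pos isHermitian_spectralGram.neg fun x hx => ?_
  have hx' : ∃ ω ∈ Icc (-π) π, ((0 : ℝ) : ℂ) + ∑ k, star x k * harmonics ν ω k ≠ 0 :=
    exists_ofReal_add_sum_harmonics_ne_zero (.inr (star_ne_zero.2 hx))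
  have hneg := integral_mul_norm_sq_neg (by linarith [Real.pi_pos]) hM hM_neg
    (g := fun ω => ∑ k, star x k * harmonics ν ω k) (by fun_prop) (by simpa using hx')
  have h := dotProduct_spectralGram_mulVec_star hM (star x)
  rw [star_star] at h
  rw [neg_mulVec, dotProduct_neg, h, ← ofReal_neg, zero_lt_real, neg_pos]
  exact mul_neg_of_pos_of_neg (by positivity) hneg

theorem isUnit_det_spectralGram (hM : ContinuousOn M (Icc (-π) π))
    (hM_neg : ∀ ω ∈ Icc (-π) π, M ω < 0) : IsUnit (spectralGram ν M).det := by
  rw [← isUnit_iff_isUnit_det, ← neg_neg (spectralGram ν M)]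
  exact (posDef_neg_spectralGram hM hM_neg).isUnit.neg

theorem integral_mul_norm_sq_eq_sub_spectralGap (hM : ContinuousOn M (Icc (-π) π))
    (hM_neg : ∀ ω ∈ Icc (-π) π, M ω < 0) (u₀ : ℝ) (uh : Fin ν → ℂ) :
    (1 / (2 * π)) * ∫ ω in -π..π, M ω * ‖(u₀ : ℂ) + ∑ k, uh k * harmonics ν ω k‖ ^ 2 =
      (star (star uh + (u₀ : ℂ) • ((spectralGram ν M)⁻¹ *ᵥ spectralMoments ν M)) ⬝ᵥ
        spectralGram ν M *ᵥ (star uh + (u₀ : ℂ) • ((spectralGram ν M)⁻¹ *ᵥ spectralMoments ν M))).re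
        - spectralGap ν M * u₀ ^ 2 := by
  rw [integral_mul_norm_sq_eq_spectral hM,
    isHermitian_spectralGram.re_dotProduct_mulVec_add_smul_inv_mulVec
      (isUnit_det_spectralGram hM hM_neg), star_star, spectralGap]
  ring

theorem integral_mul_norm_sq_at_optimizer (hM : ContinuousOn M (Icc (-π) π))
    (hM_neg : ∀ ω ∈ Icc (-π) π, M ω < 0) (t : ℝ) :
    (1 / (2 * π)) * ∫ ω in -π..π, M ω * ‖(t : ℂ) + ∑ k,
        (-(t : ℂ) • (star (spectralMoments ν M) ᵥ* (spectralGram ν M)⁻¹)) k * harmonics ν ω k‖ ^ 2 =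
      -(spectralGap ν M * t ^ 2) := by
  rw [integral_mul_norm_sq_eq_sub_spectralGap hM hM_neg, star_smul, star_vecMul,
    isHermitian_spectralGram.inv.eq, star_star, star_neg, star_def, conj_ofReal, neg_smul,
    neg_add_cancel]
  simp

theorem spectralGap_pos (hM : ContinuousOn M (Icc (-π) π))
    (hM_neg : ∀ ω ∈ Icc (-π) π, M ω < 0) : 0 < spectralGap ν M := by
  have h := integral_mul_norm_sq_at_optimizer (ν := ν) hM hM_neg 1
  have hneg := integral_mul_norm_sq_neg (by linarith [Real.pi_pos]) hM hM_neg (by fun_prop)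
    (exists_ofReal_add_sum_harmonics_ne_zero (ν := ν) (.inl one_ne_zero)
      (c := -((1 : ℝ) : ℂ) • (star (spectralMoments ν M) ᵥ* (spectralGram ν M)⁻¹)))
  have := mul_neg_of_pos_of_neg (one_div_pos.2 Real.two_pi_pos) hneg
  rw [h, one_pow, mul_one] at this
  linarith

theorem gmiObjective_le (hM : ContinuousOn M (Icc (-π) π))
    (hM_neg : ∀ ω ∈ Icc (-π) π, M ω < 0) (u₀ : ℝ) (uh : Fin ν → ℂ) :
    gmiObjective ν M u₀ uh ≤ 1 + 2 * Real.log u₀ - spectralGap ν M * u₀ ^ 2 := by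
  have hQ := ((posDef_neg_spectralGram hM hM_neg).posSemidef.dotProduct_mulVec_nonneg
    (star uh + (u₀ : ℂ) • ((spectralGram ν M)⁻¹ *ᵥ spectralMoments ν M)))
  rw [neg_mulVec, dotProduct_neg, nonneg_iff, neg_re] at hQ
  rw [gmiObjective, add_sub_assoc, integral_mul_norm_sq_eq_sub_spectralGap hM hM_neg]
  linarith [hQ.1]

theorem gmiObjective_optimizer (hM : ContinuousOn M (Icc (-π) π))
    (hM_neg : ∀ ω ∈ Icc (-π) π, M ω < 0) (t : ℝ) :
    gmiObjective ν M t (-(t : ℂ) • (star (spectralMoments ν M) ᵥ* (spectralGram ν M)⁻¹)) =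
      1 + 2 * Real.log t - spectralGap ν M * t ^ 2 := by
  rw [gmiObjective, integral_mul_norm_sq_at_optimizer hM hM_neg]
  ring

end Spectral

theorem isi_asymptotic_gmi_max_general (ν : ℕ)
    (M : ℝ → ℝ) (hMc : ContinuousOn M (Set.Icc (-Real.pi) Real.pi))
    (hMneg : ∀ ω ∈ Set.Icc (-Real.pi) Real.pi, M ω < 0)
    (φ : ℝ → Fin ν → ℂ)
    (hφ : ∀ ω (k : Fin ν), φ ω k = Complex.exp (Complex.I * (((k : ℕ) : ℂ) + 1) * ω))
    (τ₀ : ℝ) (hτ₀ : τ₀ = (1 / (2 * Real.pi)) * ∫ ω in (-Real.pi)..Real.pi, M ω)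
    (τ₁ : Fin ν → ℂ)
    (hτ₁ : ∀ k, τ₁ k = ((1 / (2 * Real.pi) : ℝ) : ℂ) *
      ∫ ω in (-Real.pi)..Real.pi, (M ω : ℂ) * φ ω k)
    (τ₂ : Matrix (Fin ν) (Fin ν) ℂ)
    (hτ₂ : ∀ k l, τ₂ k l = ((1 / (2 * Real.pi) : ℝ) : ℂ) *
      ∫ ω in (-Real.pi)..Real.pi, (M ω : ℂ) * φ ω k * star (φ ω l))
    (u₀s : ℝ)
    (hu₀s : u₀s = ((star τ₁ ⬝ᵥ τ₂⁻¹ *ᵥ τ₁).re - τ₀) ^ (-(1 / 2 : ℝ)))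
    (uhs : Fin ν → ℂ)
    (huhs : ∀ k, uhs k = -(u₀s : ℂ) * (star τ₁ ᵥ* τ₂⁻¹) k)
    (J : ℝ → (Fin ν → ℂ) → ℝ)
    (hJ : ∀ (u₀ : ℝ) (uh : Fin ν → ℂ), J u₀ uh = 1 + 2 * Real.log u₀
      + (1 / (2 * Real.pi)) * ∫ ω in (-Real.pi)..Real.pi,
          M ω * ‖(u₀ : ℂ) + ∑ k, uh k * φ ω k‖ ^ 2) :
    ((-τ₂).PosDef ∧ 0 < (star τ₁ ⬝ᵥ τ₂⁻¹ *ᵥ τ₁).re - τ₀) ∧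
      (∀ u₀ : ℝ, 0 < u₀ → ∀ uh : Fin ν → ℂ, J u₀ uh ≤ J u₀s uhs) ∧
      J u₀s uhs = 2 * Real.log u₀s := by
  obtain rfl : φ = harmonics ν := funext₂ hφ
  obtain rfl : τ₀ = spectralMean M := hτ₀
  obtain rfl : τ₁ = spectralMoments ν M := funext hτ₁
  obtain rfl : τ₂ = spectralGram ν M := Matrix.ext hτ₂
  obtain rfl : J = gmiObjective ν M := funext₂ hJ
  replace hu₀s : u₀s = spectralGap ν M ^ (-(1 / 2 : ℝ)) := hu₀s
  replace huhs : uhs = -(u₀s : ℂ) • (star (spectralMoments ν M) ᵥ* (spectralGram ν M)⁻¹) :=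
    funext huhs
  have hgap : 0 < spectralGap ν M := spectralGap_pos hMc hMneg
  have hJs : gmiObjective ν M u₀s uhs = 2 * Real.log u₀s := by
    rw [huhs, gmiObjective_optimizer hMc hMneg, hu₀s, mul_rpow_neg_half_sq hgap]
    ring
  refine ⟨⟨posDef_neg_spectralGram hMc hMneg, hgap⟩, fun u₀ hu₀ uh => ?_, hJs⟩
  calc gmiObjective ν M u₀ uh ≤ 1 + 2 * Real.log u₀ - spectralGap ν M * u₀ ^ 2 :=
        gmiObjective_le hMc hMneg u₀ uh
    _ ≤ 2 * Real.log u₀s := hu₀s ▸ one_add_two_mul_log_sub_mul_sq_le hgap hu₀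
    _ = gmiObjective ν M u₀s uhs := hJs.symm

/-- Theorem 3 of the paper. Maximization of the asymptotic GMI over
causal degree-`ν` spectral factors `U(ω) = u₀ + Σ_{k=1}^{ν} uh_k e^{ikω}`, for a continuous
negative spectrum `M` on `[-π, π]`. -/
theorem isi_asymptotic_gmi_max (ν : ℕ) (hν : 1 ≤ ν)
    (M : ℝ → ℝ) (hMc : ContinuousOn M (Set.Icc (-Real.pi) Real.pi))
    (hMneg : ∀ ω ∈ Set.Icc (-Real.pi) Real.pi, M ω < 0)
    (φ : ℝ → Fin ν → ℂ)
    (hφ : ∀ ω (k : Fin ν), φ ω k = Complex.exp (Complex.I * (((k : ℕ) : ℂ) + 1) * ω))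
    (τ₀ : ℝ) (hτ₀ : τ₀ = (1 / (2 * Real.pi)) * ∫ ω in (-Real.pi)..Real.pi, M ω)
    (τ₁ : Fin ν → ℂ)
    (hτ₁ : ∀ k, τ₁ k = ((1 / (2 * Real.pi) : ℝ) : ℂ) *
      ∫ ω in (-Real.pi)..Real.pi, (M ω : ℂ) * φ ω k)
    (τ₂ : Matrix (Fin ν) (Fin ν) ℂ)
    (hτ₂ : ∀ k l, τ₂ k l = ((1 / (2 * Real.pi) : ℝ) : ℂ) *
      ∫ ω in (-Real.pi)..Real.pi, (M ω : ℂ) * φ ω k * star (φ ω l))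
    (u₀s : ℝ)
    (hu₀s : u₀s = ((star τ₁ ⬝ᵥ τ₂⁻¹ *ᵥ τ₁).re - τ₀) ^ (-(1 / 2 : ℝ)))
    (uhs : Fin ν → ℂ)
    (huhs : ∀ k, uhs k = -(u₀s : ℂ) * (star τ₁ ᵥ* τ₂⁻¹) k)
    (J : ℝ → (Fin ν → ℂ) → ℝ)
    (hJ : ∀ (u₀ : ℝ) (uh : Fin ν → ℂ), J u₀ uh = 1 + 2 * Real.log u₀
      + (1 / (2 * Real.pi)) * ∫ ω in (-Real.pi)..Real.pi,
          M ω * ‖(u₀ : ℂ) + ∑ k, uh k * φ ω k‖ ^ 2) :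
    ((-τ₂).PosDef ∧ 0 < (star τ₁ ⬝ᵥ τ₂⁻¹ *ᵥ τ₁).re - τ₀) ∧
      (∀ u₀ : ℝ, 0 < u₀ → ∀ uh : Fin ν → ℂ, J u₀ uh ≤ J u₀s uhs) ∧
      J u₀s uhs = 2 * Real.log u₀s :=
  isi_asymptotic_gmi_max_general ν M hMc hMneg φ hφ τ₀ hτ₀ τ₁ hτ₁ τ₂ hτ₂ u₀s hu₀s uhs huhs J hJ
end

section
/- Let H ∈ ℂ^{N×K} with HᴴH invertible and let ν ≥ 0. For each N₀ > 0 set M(N₀) := Hᴴ(N₀I + HHᴴ)⁻¹H − I, and suppose G(N₀) is a Hermitian K×K matrix banded within diagonals [−ν, ν] with I + G(N₀) positive definite satisfying [(I+G(N₀))⁻¹]_ν = −[M(N₀)]_ν. Then: (i) lim_{N₀→0⁺} [(N₀(I+G(N₀)))⁻¹]_ν = [(HᴴH)⁻¹]_ν; (ii) lim_{N₀→∞} [N₀ G(N₀)]_ν = [HᴴH]_ν (limits entrywise). -/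
/-!
With `A = HᴴH`, the push-through identity `Hᴴ(N₀ + HHᴴ)⁻¹H = I - N₀(N₀ + A)⁻¹` turns the
stationarity condition into `[(I + G)⁻¹]_ν = [N₀(N₀ + A)⁻¹]_ν`, so part (i) is continuity of the
matrix inverse at the invertible `A`.

For (ii) put `E = I - N₀(N₀ + A)⁻¹`; then `N₀E → A` and `[(I + G)⁻¹]_ν = I - [E]_ν`. Let
`P = G(I + G)⁻¹G = G + (I + G)⁻¹ - I`, a positive semidefinite matrix with `[P]_ν = G - [E]_ν`.
Because `G` is banded, `tr P = tr(GE) ≤ ‖G‖_F ‖E‖_F`. In the eigenbasis of `I + G`, with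
eigenvalues `tᵢ > 0`, `‖G‖_F² = Σ (tᵢ - 1)² ≤ (1 + ‖G‖_F) Σ (tᵢ - 1)²/tᵢ = (1 + ‖G‖_F) tr P`,
which forces `‖G‖_F ≤ 2‖E‖_F` once `‖E‖_F ≤ 1/2`. The entries of `P` are bounded by `tr P`, so
`G - [E]_ν = O(‖E‖_F²) = O(N₀⁻²)`, and `N₀G` has the same band-part limit `[A]_ν` as `N₀[E]_ν`.
-/

open Matrix Filter
open scoped ComplexOrder Topology

open scoped Matrix.Norms.Frobenius

section Frobenius

variable {m n : Type*} [Fintype m] [Fintype n]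

theorem Matrix.frobenius_norm_sq (A : Matrix m n ℂ) : ‖A‖ ^ 2 = ∑ i, ∑ j, ‖A i j‖ ^ 2 := by
  rw [frobenius_norm_def, ← Real.sqrt_eq_rpow, Real.sq_sqrt (by positivity)]
  simp only [Real.rpow_two]

theorem Matrix.trace_conjTranspose_mul_self (A : Matrix m n ℂ) :
    trace (Aᴴ * A) = ((‖A‖ ^ 2 : ℝ) : ℂ) := by
  rw [frobenius_norm_sq, Finset.sum_comm]
  push_cast
  simp only [trace, diag, mul_apply, conjTranspose_apply, RCLike.star_def, Complex.conj_mul']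

theorem Matrix.norm_trace_mul_le (A : Matrix m n ℂ) (B : Matrix n m ℂ) :
    ‖trace (A * B)‖ ≤ ‖A‖ * ‖B‖ := by
  have hsum (C : Matrix m n ℂ) : ‖C‖ = √(∑ p : m × n, ‖C p.1 p.2‖ ^ 2) := by
    rw [← Real.sqrt_sq (norm_nonneg C), frobenius_norm_sq, Fintype.sum_prod_type]
  calc ‖trace (A * B)‖ = ‖∑ p : m × n, A p.1 p.2 * Bᵀ p.1 p.2‖ := by
        simp only [trace, diag, mul_apply, Fintype.sum_prod_type, transpose_apply]
    _ ≤ ∑ p : m × n, ‖A p.1 p.2‖ * ‖Bᵀ p.1 p.2‖ := by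
        simpa only [norm_mul] using
          norm_sum_le Finset.univ fun p : m × n => A p.1 p.2 * Bᵀ p.1 p.2
    _ ≤ ‖A‖ * ‖Bᵀ‖ := by
        rw [hsum A, hsum Bᵀ]; exact Real.sum_mul_le_sqrt_mul_sqrt _ _ _
    _ = ‖A‖ * ‖B‖ := by rw [frobenius_norm_transpose]

end Frobenius

section ConjDiagonal

open Unitary

variable {n : Type*} [Fintype n] [DecidableEq n]

noncomputable def Matrix.conjDiagonal (U : unitary (Matrix n n ℂ)) : (n → ℝ) →+* Matrix n n ℂ :=
  ((conjStarAlgAut ℂ _ U : Matrix n n ℂ ≃⋆ₐ[ℂ] Matrix n n ℂ) : Matrix n n ℂ →+* Matrix n n ℂ).comp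
    ((diagonalRingHom n ℂ).comp (Complex.ofRealHom.compLeft n))

theorem Matrix.conjDiagonal_apply (U : unitary (Matrix n n ℂ)) (d : n → ℝ) :
    conjDiagonal U d = U * diagonal (fun i => (d i : ℂ)) * (star U : Matrix n n ℂ) := rfl

theorem Matrix.IsHermitian.conjDiagonal_eigenvalues {A : Matrix n n ℂ} (hA : A.IsHermitian) :
    conjDiagonal hA.eigenvectorUnitary hA.eigenvalues = A :=
  hA.spectral_theorem.symm

theorem Matrix.trace_conjDiagonal (U : unitary (Matrix n n ℂ)) (d : n → ℝ) :
    trace (conjDiagonal U d) = ((∑ i, d i : ℝ) : ℂ) := by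
  rw [conjDiagonal_apply, trace_mul_cycle, coe_star_mul_self, one_mul, trace_diagonal]
  push_cast; rfl

theorem Matrix.norm_conjDiagonal_apply_le (U : unitary (Matrix n n ℂ)) (d : n → ℝ) (k l : n) :
    ‖conjDiagonal U d k l‖ ≤ ∑ i, |d i| := by
  rw [conjDiagonal_apply, mul_apply]
  refine (norm_sum_le _ _).trans (Finset.sum_le_sum fun i _ => ?_)
  have hU (a b : n) : ‖(U : Matrix n n ℂ) a b‖ ≤ 1 := entry_norm_bound_of_unitary U.2 a b
  simp only [mul_diagonal, star_apply, norm_mul, norm_star, Complex.norm_real, Real.norm_eq_abs]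
  calc ‖(U : Matrix n n ℂ) k i‖ * |d i| * ‖(U : Matrix n n ℂ) l i‖ ≤ 1 * |d i| * 1 := by
        gcongr <;> exact hU _ _
    _ = |d i| := by ring

theorem Matrix.PosSemidef.norm_apply_le_trace {P : Matrix n n ℂ} (hP : P.PosSemidef) (k l : n) :
    ‖P k l‖ ≤ (trace P).re := by
  rw [← hP.isHermitian.conjDiagonal_eigenvalues, trace_conjDiagonal, Complex.ofReal_re]
  refine (norm_conjDiagonal_apply_le _ _ k l).trans_eq (Finset.sum_congr rfl fun i _ => ?_)
  exact abs_of_nonneg (hP.eigenvalues_nonneg i)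

end ConjDiagonal

section BandPart

variable {K ν : ℕ}

theorem bandPart_apply (A : Matrix (Fin K) (Fin K) ℂ) (k ℓ : Fin K) :
    bandPart ν A k ℓ = if |((k : ℕ) : ℤ) - ((ℓ : ℕ) : ℤ)| ≤ (ν : ℤ) then A k ℓ else 0 := rfl

theorem bandPart_add (A B : Matrix (Fin K) (Fin K) ℂ) :
    bandPart ν (A + B) = bandPart ν A + bandPart ν B := by
  ext k ℓ; simp only [bandPart_apply, Matrix.add_apply]; split_ifs <;> simp

theorem bandPart_sub (A B : Matrix (Fin K) (Fin K) ℂ) :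
    bandPart ν (A - B) = bandPart ν A - bandPart ν B := by
  ext k ℓ; simp only [bandPart_apply, Matrix.sub_apply]; split_ifs <;> simp

theorem bandPart_neg (A : Matrix (Fin K) (Fin K) ℂ) : bandPart ν (-A) = -bandPart ν A := by
  ext k ℓ; simp only [bandPart_apply, Matrix.neg_apply]; split_ifs <;> simp

theorem bandPart_smul (c : ℂ) (A : Matrix (Fin K) (Fin K) ℂ) :
    bandPart ν (c • A) = c • bandPart ν A := by
  ext k ℓ; simp only [bandPart_apply, Matrix.smul_apply]; split_ifs <;> simp

theorem bandPart_one : bandPart ν (1 : Matrix (Fin K) (Fin K) ℂ) = 1 := by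
  ext k ℓ; simp only [bandPart_apply, Matrix.one_apply]; split_ifs <;> simp_all

theorem bandPart_eq_self_iff {A : Matrix (Fin K) (Fin K) ℂ} :
    bandPart ν A = A ↔ ∀ k ℓ : Fin K, |((k : ℕ) : ℤ) - ((ℓ : ℕ) : ℤ)| > (ν : ℤ) → A k ℓ = 0 := by
  refine ⟨fun h k ℓ hkℓ => ?_, fun h => ?_⟩
  · rw [← h, bandPart_apply, if_neg hkℓ.not_ge]
  · ext k ℓ; rw [bandPart_apply]; split_ifs with hkℓ
    · rfl
    · exact (h k ℓ (lt_of_not_ge hkℓ)).symm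

theorem norm_bandPart_apply_le (A : Matrix (Fin K) (Fin K) ℂ) (k ℓ : Fin K) :
    ‖bandPart ν A k ℓ‖ ≤ ‖A k ℓ‖ := by
  rw [bandPart_apply]; split_ifs <;> simp

theorem continuous_bandPart : Continuous (bandPart (K := K) ν) :=
  continuous_pi fun k => continuous_pi fun ℓ => by
    simp only [bandPart_apply]
    split_ifs
    exacts [(continuous_apply ℓ).comp (continuous_apply k), continuous_const]

theorem trace_mul_bandPart {A : Matrix (Fin K) (Fin K) ℂ} (hA : bandPart ν A = A)
    (X : Matrix (Fin K) (Fin K) ℂ) : trace (A * bandPart ν X) = trace (A * X) := by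
  conv_lhs => rw [← hA]
  conv_rhs => rw [← hA]
  simp only [trace, diag, mul_apply]
  refine Finset.sum_congr rfl fun k _ => Finset.sum_congr rfl fun ℓ _ => ?_
  simp only [bandPart_apply, abs_sub_comm ((ℓ : ℕ) : ℤ)]
  split_ifs <;> simp

end BandPart

theorem Matrix.PosDef.norm_sq_le_one_add_norm_mul_re_trace {n : Type*} [Fintype n]
    [DecidableEq n] {G : Matrix n n ℂ} (hG : (1 + G).PosDef) :
    ‖G‖ ^ 2 ≤ (1 + ‖G‖) * (trace (G * (1 + G)⁻¹ * G)).re := by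
  set Φ := conjDiagonal hG.isHermitian.eigenvectorUnitary
  set t := hG.isHermitian.eigenvalues
  have ht : ∀ i, 0 < t i := hG.eigenvalues_pos
  have hS : 1 + G = Φ t := hG.isHermitian.conjDiagonal_eigenvalues.symm
  have hGΦ : G = Φ (t - 1) := by rw [map_sub, map_one, ← hS, add_sub_cancel_left]
  have hinv : (1 + G)⁻¹ = Φ t⁻¹ := by
    refine inv_eq_right_inv ?_
    rw [hS, ← map_mul, ← map_one Φ]
    congr 1
    ext i
    exact mul_inv_cancel₀ (ht i).ne'
  have hGH : Gᴴ = G := by simpa using (hG.isHermitian.sub isHermitian_one).eq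
  have hnorm : ‖G‖ ^ 2 = ∑ i, (t i - 1) ^ 2 := by
    have h := trace_conjTranspose_mul_self G
    rw [hGH, hGΦ, ← map_mul, trace_conjDiagonal, ← hGΦ] at h
    rw [Complex.ofReal_inj] at h
    simp only [← h, Pi.mul_apply, Pi.sub_apply, Pi.one_apply, sq]
  have htr : (trace (G * (1 + G)⁻¹ * G)).re = ∑ i, (t i - 1) ^ 2 / t i := by
    rw [hinv, hGΦ, ← map_mul, ← map_mul, trace_conjDiagonal, Complex.ofReal_re]
    refine Finset.sum_congr rfl fun i _ => ?_
    simp only [Pi.mul_apply, Pi.inv_apply, Pi.sub_apply, Pi.one_apply]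
    ring
  have hle : ∀ i, t i ≤ 1 + ‖G‖ := fun i => by
    have : (t i - 1) ^ 2 ≤ ‖G‖ ^ 2 :=
      hnorm ▸ Finset.single_le_sum (fun j _ => sq_nonneg (t j - 1)) (Finset.mem_univ i)
    nlinarith [norm_nonneg G]
  rw [htr, hnorm, Finset.mul_sum]
  refine Finset.sum_le_sum fun i _ => ?_
  calc (t i - 1) ^ 2 = (t i - 1) ^ 2 / t i * t i := by field_simp [(ht i).ne']
    _ ≤ (t i - 1) ^ 2 / t i * (1 + ‖G‖) :=
        mul_le_mul_of_nonneg_left (hle i) (div_nonneg (sq_nonneg _) (ht i).le)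
    _ = (1 + ‖G‖) * ((t i - 1) ^ 2 / t i) := mul_comm _ _

theorem norm_sub_bandPart_apply_le {K ν : ℕ} {G E : Matrix (Fin K) (Fin K) ℂ}
    (hband : bandPart ν G = G) (hpd : (1 + G).PosDef)
    (hGE : bandPart ν (1 + G)⁻¹ = 1 - bandPart ν E) {ε : ℝ} (hε : ε ≤ 1 / 2) (hE : ‖E‖ ≤ ε)
    (k ℓ : Fin K) : ‖(G - bandPart ν E) k ℓ‖ ≤ 2 * ε ^ 2 := by
  have hdet : IsUnit (1 + G).det := (isUnit_iff_isUnit_det _).mp hpd.isUnit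
  set B := (1 + G)⁻¹
  have hGB : G * B = 1 - B := by rw [eq_sub_iff_add_eq', ← one_add_mul, mul_nonsing_inv _ hdet]
  have hBG : B * G = 1 - B := by rw [eq_sub_iff_add_eq', ← mul_one_add, nonsing_inv_mul _ hdet]
  have hP : G * B * G = G + B - 1 := by rw [mul_assoc, hBG, mul_sub, mul_one, hGB]; abel
  set P := G * B * G
  have hPpsd : P.PosSemidef := by
    have hGH : Gᴴ = G := by simpa using (hpd.isHermitian.sub isHermitian_one).eq
    simpa only [hGH] using hpd.inv.posSemidef.conjTranspose_mul_mul_same G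
  have hbandP : G - bandPart ν E = bandPart ν P := by
    rw [hP, bandPart_sub, bandPart_add, hGE, hband, bandPart_one]; abel
  have htr : trace P = trace (G * E) := by
    have hEB : bandPart ν E = 1 - bandPart ν B := by rw [hGE]; abel
    rw [← trace_mul_bandPart hband E, hEB, mul_sub, mul_one, trace_sub,
      trace_mul_bandPart hband, hGB, hP]
    simp only [trace_add, trace_sub]; ring
  have htrP : (trace P).re ≤ ‖G‖ * ε := by
    rw [htr]
    exact (Complex.re_le_norm _).trans <|
      (norm_trace_mul_le G E).trans (mul_le_mul_of_nonneg_left hE (norm_nonneg G))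
  have hG : ‖G‖ ≤ 2 * ε := by
    have hε0 : 0 ≤ ε := (norm_nonneg E).trans hE
    have := hpd.norm_sq_le_one_add_norm_mul_re_trace
    nlinarith [norm_nonneg G, mul_le_mul_of_nonneg_left htrP (by positivity : (0:ℝ) ≤ 1 + ‖G‖)]
  calc ‖(G - bandPart ν E) k ℓ‖ = ‖bandPart ν P k ℓ‖ := by rw [hbandP]
    _ ≤ ‖P k ℓ‖ := norm_bandPart_apply_le P k ℓ
    _ ≤ (trace P).re := hPpsd.norm_apply_le_trace k ℓ
    _ ≤ ‖G‖ * ε := htrP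
    _ ≤ 2 * ε * ε := mul_le_mul_of_nonneg_right hG ((norm_nonneg E).trans hE)
    _ = 2 * ε ^ 2 := by ring

theorem Matrix.PosSemidef.posDef_ofReal_smul_one_add {n : Type*} [DecidableEq n]
    {P : Matrix n n ℂ} (hP : P.PosSemidef) {c : ℝ} (hc : 0 < c) : ((c : ℂ) • 1 + P).PosDef := by
  simpa only [Complex.coe_smul] using (PosDef.one.smul hc).add_posSemidef hP

section Resolvent

variable {n : Type*} [Fintype n] [DecidableEq n]

theorem Matrix.tendsto_inv_ofReal_smul_add {A B : Matrix n n ℂ} (hB : IsUnit B) :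
    Tendsto (fun y : ℝ => ((y : ℂ) • A + B)⁻¹) (𝓝 0) (𝓝 B⁻¹) := by
  have hdet : IsUnit B.det := (isUnit_iff_isUnit_det B).mp hB
  have hinv : ContinuousAt Inv.inv B :=
    continuousAt_matrix_inv B (by rw [Ring.inverse_eq_inv']; exact continuousAt_inv₀ hdet.ne_zero)
  exact hinv.tendsto.comp (Continuous.tendsto' (by fun_prop) 0 B (by simp))

theorem Matrix.conjTranspose_mul_inv_smul_one_add_mul {m : Type*} [Fintype m] [DecidableEq m]
    (H : Matrix m n ℂ) {c : ℝ} (hc : 0 < c) :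
    Hᴴ * ((c : ℂ) • 1 + H * Hᴴ)⁻¹ * H = 1 - (c : ℂ) • ((c : ℂ) • 1 + Hᴴ * H)⁻¹ := by
  set S := (c : ℂ) • (1 : Matrix m m ℂ) + H * Hᴴ
  set T := (c : ℂ) • (1 : Matrix n n ℂ) + Hᴴ * H
  have hS : IsUnit S.det := (isUnit_iff_isUnit_det S).mp
    ((posSemidef_self_mul_conjTranspose H).posDef_ofReal_smul_one_add hc).isUnit
  have hT : IsUnit T.det := (isUnit_iff_isUnit_det T).mp
    ((posSemidef_conjTranspose_mul_self H).posDef_ofReal_smul_one_add hc).isUnit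
  have hcomm : H * T = S * H := by
    simp only [S, T, Matrix.mul_add, Matrix.add_mul, Matrix.mul_smul, Matrix.smul_mul,
      Matrix.mul_one, Matrix.one_mul, Matrix.mul_assoc]
  have hpush : S⁻¹ * H = H * T⁻¹ := by
    rw [← Matrix.mul_one (S⁻¹ * H), ← mul_nonsing_inv T hT, ← Matrix.mul_assoc,
      Matrix.mul_assoc S⁻¹, hcomm, ← Matrix.mul_assoc, nonsing_inv_mul S hS, Matrix.one_mul]
  have hHH : Hᴴ * H = T - (c : ℂ) • 1 := by simp only [T, add_sub_cancel_left]
  rw [Matrix.mul_assoc, hpush, ← Matrix.mul_assoc, hHH, sub_mul, mul_nonsing_inv T hT, smul_mul,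
    one_mul]

theorem Matrix.PosSemidef.tendsto_smul_one_sub_smul_inv {A : Matrix n n ℂ} (hA : A.PosSemidef) :
    Tendsto (fun x : ℝ => (x : ℂ) • (1 - (x : ℂ) • ((x : ℂ) • 1 + A)⁻¹)) atTop (𝓝 A) := by
  have hR : Tendsto (fun x : ℝ => A * (((x⁻¹ : ℝ) : ℂ) • A + 1)⁻¹) atTop (𝓝 A) := by
    have h := ((tendsto_inv_ofReal_smul_add (A := A) isUnit_one).comp
      tendsto_inv_atTop_zero).const_mul A
    rwa [inv_one, Matrix.mul_one] at h
  refine hR.congr' ?_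
  filter_upwards [eventually_gt_atTop 0] with x hx
  have hx' : (x : ℂ) ≠ 0 := by exact_mod_cast hx.ne'
  set S := (x : ℂ) • (1 : Matrix n n ℂ) + A
  have hS : IsUnit S.det := (isUnit_iff_isUnit_det S).mp (hA.posDef_ofReal_smul_one_add hx).isUnit
  have hinv : (((x⁻¹ : ℝ) : ℂ) • A + 1)⁻¹ = (x : ℂ) • S⁻¹ := by
    have hS' : ((x⁻¹ : ℝ) : ℂ) • A + 1 = (x : ℂ)⁻¹ • S := by
      rw [smul_add, smul_smul, inv_mul_cancel₀ hx', one_smul, add_comm, Complex.ofReal_inv]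
    refine inv_eq_right_inv ?_
    rw [hS', Matrix.smul_mul, Matrix.mul_smul, mul_nonsing_inv _ hS, smul_smul,
      inv_mul_cancel₀ hx', one_smul]
  calc A * (((x⁻¹ : ℝ) : ℂ) • A + 1)⁻¹ = (x : ℂ) • ((S - (x : ℂ) • 1) * S⁻¹) := by
        rw [hinv, Matrix.mul_smul, add_sub_cancel_left]
    _ = (x : ℂ) • (1 - (x : ℂ) • S⁻¹) := by
        rw [sub_mul, mul_nonsing_inv _ hS, Matrix.smul_mul, Matrix.one_mul]

end Resolvent

section Asymptotics

variable {K ν : ℕ} {A : Matrix (Fin K) (Fin K) ℂ} {G : ℝ → Matrix (Fin K) (Fin K) ℂ}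

theorem tendsto_bandPart_inv_smul_nhdsGT (hA : IsUnit A)
    (hG : ∀ N₀ : ℝ, 0 < N₀ → IsUnit (1 + G N₀).det)
    (h : ∀ N₀ : ℝ, 0 < N₀ →
      bandPart ν (1 + G N₀)⁻¹ = (N₀ : ℂ) • bandPart ν ((N₀ : ℂ) • 1 + A)⁻¹) :
    Tendsto (fun N₀ : ℝ => bandPart ν ((N₀ : ℂ) • (1 + G N₀))⁻¹) (𝓝[>] 0)
      (𝓝 (bandPart ν A⁻¹)) := by
  have hlim : Tendsto (fun N₀ : ℝ => bandPart ν ((N₀ : ℂ) • 1 + A)⁻¹) (𝓝[>] 0)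
      (𝓝 (bandPart ν A⁻¹)) := (continuous_bandPart.tendsto A⁻¹).comp
    ((tendsto_inv_ofReal_smul_add hA).mono_left nhdsWithin_le_nhds)
  refine hlim.congr' ?_
  filter_upwards [self_mem_nhdsWithin] with N₀ (hN₀ : 0 < N₀)
  have hN₀' : (N₀ : ℂ) ≠ 0 := by exact_mod_cast hN₀.ne'
  have hinv : ((N₀ : ℂ) • (1 + G N₀))⁻¹ = (N₀ : ℂ)⁻¹ • (1 + G N₀)⁻¹ := inv_eq_left_inv <| by
    rw [Matrix.smul_mul, Matrix.mul_smul, nonsing_inv_mul _ (hG N₀ hN₀), smul_smul,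
      inv_mul_cancel₀ hN₀', one_smul]
  rw [hinv, bandPart_smul, h N₀ hN₀, smul_smul, inv_mul_cancel₀ hN₀', one_smul]

theorem tendsto_bandPart_smul_atTop (hA : A.PosSemidef)
    (hband : ∀ N₀ : ℝ, 0 < N₀ → bandPart ν (G N₀) = G N₀)
    (hG : ∀ N₀ : ℝ, 0 < N₀ → (1 + G N₀).PosDef)
    (h : ∀ N₀ : ℝ, 0 < N₀ →
      bandPart ν (1 + G N₀)⁻¹ = (N₀ : ℂ) • bandPart ν ((N₀ : ℂ) • 1 + A)⁻¹) :
    Tendsto (fun N₀ : ℝ => bandPart ν ((N₀ : ℂ) • G N₀)) atTop (𝓝 (bandPart ν A)) := by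
  set E := fun N₀ : ℝ => 1 - (N₀ : ℂ) • ((N₀ : ℂ) • 1 + A)⁻¹
  have hNE : Tendsto (fun N₀ : ℝ => (N₀ : ℂ) • E N₀) atTop (𝓝 A) :=
    hA.tendsto_smul_one_sub_smul_inv
  have hnorm : ∀ N₀ : ℝ, 0 < N₀ → ‖(N₀ : ℂ) • E N₀‖ = N₀ * ‖E N₀‖ := fun N₀ hN₀ => by
    rw [norm_smul, Complex.norm_real, Real.norm_of_nonneg hN₀.le]
  have hE : Tendsto (fun N₀ : ℝ => ‖E N₀‖) atTop (𝓝 0) := by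
    have h0 := tendsto_inv_atTop_zero.mul hNE.norm
    rw [zero_mul] at h0
    refine h0.congr' ?_
    filter_upwards [eventually_gt_atTop 0] with N₀ hN₀
    rw [hnorm N₀ hN₀, inv_mul_cancel_left₀ hN₀.ne']
  have hGE : ∀ N₀ : ℝ, 0 < N₀ → bandPart ν (1 + G N₀)⁻¹ = 1 - bandPart ν (E N₀) :=
    fun N₀ hN₀ => by rw [h N₀ hN₀, bandPart_sub, bandPart_one, bandPart_smul, sub_sub_cancel]
  have hrem : Tendsto (fun N₀ : ℝ => (N₀ : ℂ) • (G N₀ - bandPart ν (E N₀))) atTop (𝓝 0) := by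
    have hbound : Tendsto (fun N₀ : ℝ => 2 * ‖(N₀ : ℂ) • E N₀‖ * ‖E N₀‖) atTop (𝓝 0) := by
      simpa using (hNE.norm.const_mul 2).mul hE
    refine tendsto_pi_nhds.2 fun k => tendsto_pi_nhds.2 fun ℓ => squeeze_zero_norm' ?_ hbound
    filter_upwards [eventually_gt_atTop 0, hE.eventually_le_const (by norm_num : (0 : ℝ) < 1 / 2)]
      with N₀ hN₀ hEN₀
    rw [Matrix.smul_apply, norm_smul, Complex.norm_real, Real.norm_of_nonneg hN₀.le, hnorm N₀ hN₀]
    have := norm_sub_bandPart_apply_le (hband N₀ hN₀) (hG N₀ hN₀) (hGE N₀ hN₀) hEN₀ le_rfl k ℓ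
    nlinarith
  have hsum := (((continuous_bandPart (ν := ν)).tendsto A).comp hNE).add hrem
  rw [add_zero] at hsum
  refine hsum.congr' ?_
  filter_upwards [eventually_gt_atTop 0] with N₀ hN₀
  rw [Function.comp_apply, bandPart_smul, bandPart_smul, hband N₀ hN₀, ← smul_add,
    add_sub_cancel]

end Asymptotics

theorem optimal_G_snr_asymptotics_general {N K : ℕ}
    (H : Matrix (Fin N) (Fin K) ℂ) (hinv : IsUnit (Hᴴ * H)) (ν : ℕ)
    (G : ℝ → Matrix (Fin K) (Fin K) ℂ)
    (hG : ∀ N₀ : ℝ, 0 < N₀ →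
      (G N₀).IsHermitian ∧
      (∀ k ℓ : Fin K, |((k : ℕ) : ℤ) - ((ℓ : ℕ) : ℤ)| > (ν : ℤ) → G N₀ k ℓ = 0) ∧
      (1 + G N₀).PosDef ∧
      bandPart ν (1 + G N₀)⁻¹
        = -(bandPart ν (Hᴴ * ((N₀ : ℂ) • 1 + H * Hᴴ)⁻¹ * H - 1))) :
    Tendsto (fun N₀ : ℝ => bandPart ν (((N₀ : ℂ) • (1 + G N₀))⁻¹))
        (𝓝[>] (0 : ℝ)) (𝓝 (bandPart ν (Hᴴ * H)⁻¹)) ∧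
      Tendsto (fun N₀ : ℝ => bandPart ν ((N₀ : ℂ) • G N₀))
        atTop (𝓝 (bandPart ν (Hᴴ * H))) := by
  have h : ∀ N₀ : ℝ, 0 < N₀ →
      bandPart ν (1 + G N₀)⁻¹ = (N₀ : ℂ) • bandPart ν ((N₀ : ℂ) • 1 + Hᴴ * H)⁻¹ :=
    fun N₀ hN₀ => by
      rw [(hG N₀ hN₀).2.2.2, conjTranspose_mul_inv_smul_one_add_mul H hN₀, sub_sub_cancel_left,
        bandPart_neg, neg_neg, bandPart_smul]
  have hpd N₀ (hN₀ : 0 < N₀) : (1 + G N₀).PosDef := (hG N₀ hN₀).2.2.1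
  exact ⟨tendsto_bandPart_inv_smul_nhdsGT hinv
      (fun N₀ hN₀ => (isUnit_iff_isUnit_det _).mp (hpd N₀ hN₀).isUnit) h,
    tendsto_bandPart_smul_atTop (posSemidef_conjTranspose_mul_self H)
      (fun N₀ hN₀ => bandPart_eq_self_iff.2 (hG N₀ hN₀).2.1) hpd h⟩

/-- Lemma 3 of the paper. SNR asymptotics of the optimal banded trellis
representation matrix `G(N₀)` satisfying `[(I+G(N₀))⁻¹]_ν = −[M(N₀)]_ν` with
`M(N₀) = Hᴴ(N₀I+HHᴴ)⁻¹H − I`: as `N₀ → 0⁺`, `[(N₀(I+G(N₀)))⁻¹]_ν → [(HᴴH)⁻¹]_ν`, and as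
`N₀ → ∞`, `[N₀ G(N₀)]_ν → [HᴴH]_ν`. -/
theorem optimal_G_snr_asymptotics {N K : ℕ} (hK : 1 ≤ K)
    (H : Matrix (Fin N) (Fin K) ℂ) (hinv : IsUnit (Hᴴ * H)) (ν : ℕ)
    (G : ℝ → Matrix (Fin K) (Fin K) ℂ)
    (hG : ∀ N₀ : ℝ, 0 < N₀ →
      (G N₀).IsHermitian ∧
      (∀ k ℓ : Fin K, |((k : ℕ) : ℤ) - ((ℓ : ℕ) : ℤ)| > (ν : ℤ) → G N₀ k ℓ = 0) ∧
      (1 + G N₀).PosDef ∧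
      bandPart ν (1 + G N₀)⁻¹
        = -(bandPart ν (Hᴴ * ((N₀ : ℂ) • 1 + H * Hᴴ)⁻¹ * H - 1))) :
    Tendsto (fun N₀ : ℝ => bandPart ν (((N₀ : ℂ) • (1 + G N₀))⁻¹))
        (𝓝[>] (0 : ℝ)) (𝓝 (bandPart ν (Hᴴ * H)⁻¹)) ∧
      Tendsto (fun N₀ : ℝ => bandPart ν ((N₀ : ℂ) • G N₀))
        atTop (𝓝 (bandPart ν (Hᴴ * H))) :=
  optimal_G_snr_asymptotics_general H hinv ν G hG
end
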